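/- arXiv:2105.12616 — 7 statements merged into one kernel-verified Lean document; each statement's English description precedes it below -/
import Mathlib

section
/- Suppose that either e ≠ 2 (i.e. t ≠ s) or 3 does not divide 2n−1. Define i_max = ⌊(2n−2+e/2)/3⌋ if e ≤ 2 (i.e. t ≤ s) and i_max = ⌈(2n−2+e/2)/3⌉ − 1 if e > 2 (i.e. t > s). Then δ is strictly increasing on {0, 1, …, i_max} and strictly decreasing on {i_max, …, n−1}; in particular δ attains its maximum value exactly at i = i_max. -/
open Finset

/-- `t = s^(e/2)` as a real number. -/
noncomputable def tval (s e : ℕ) : ℝ := (s : ℝ) ^ ((e : ℝ) / 2)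

/-- `δ(i) = |Δ_i|`, the number of `i`-dimensional singular subspaces of a finite
polar space of rank `n` with orders `(s, …, s, t)`, `t = s^(e/2)`. -/
noncomputable def delta (n s e : ℕ) (i : ℤ) : ℝ :=
  (∏ u ∈ Finset.Icc (0:ℤ) i, ((s:ℝ) ^ ((n:ℤ) - u - 1) * tval s e + 1)) *
  (∏ u ∈ Finset.Icc (0:ℤ) i, ((s:ℝ) ^ ((n:ℤ) - u) - 1)) /
  (∏ u ∈ Finset.Icc (0:ℤ) i, ((s:ℝ) ^ (u + 1) - 1))

lemma zpow_two_mul' (σ : ℝ) (k : ℤ) : (σ^(2:ℕ))^k = σ^(2*k) := by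
  rw [← zpow_natCast σ 2, ← zpow_mul]; norm_num

lemma core_inc (σ : ℝ) (hσ : 1 < σ) (e : ℕ) (a b : ℤ) (ha : (e:ℤ) + 2 ≤ a)
    (hD : (e ≤ 1 ∧ b ≤ a) ∨ (e = 2 ∧ b ≤ a - 2) ∨ (e = 3 ∧ b ≤ a - 1) ∨ (e = 4 ∧ b ≤ a - 2)) :
    σ ^ b < σ ^ a + σ ^ (2:ℤ) - σ ^ (e:ℤ) := by
  have hσ0 : (0:ℝ) < σ := by linarith
  rcases hD with ⟨he, hb⟩ | ⟨he, hb⟩ | ⟨he, hb⟩ | ⟨he, hb⟩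
  · have h1 : σ ^ b ≤ σ ^ a := zpow_le_zpow_right₀ hσ.le hb
    have h2 : σ ^ (e:ℤ) < σ ^ (2:ℤ) := zpow_lt_zpow_right₀ hσ (by omega)
    linarith
  · subst he
    have h1 : σ ^ b < σ ^ a := zpow_lt_zpow_right₀ hσ (by omega)
    norm_num
    linarith
  · subst he
    have h1 : σ ^ b ≤ σ ^ (a-1) := zpow_le_zpow_right₀ hσ.le hb
    have h2 : σ ^ a = σ ^ (a-1) * σ := by
      rw [← zpow_add_one₀ (ne_of_gt hσ0)]; ring_nf
    have h3 : σ ^ ((3:ℕ):ℤ) = σ^(2:ℤ) * σ := by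
      rw [← zpow_add_one₀ (ne_of_gt hσ0)]; norm_num
    have h4 : σ ^ (2:ℤ) < σ ^ (a-1) := zpow_lt_zpow_right₀ hσ (by omega)
    rw [h2, h3]
    nlinarith [zpow_pos hσ0 (a-1)]
  · subst he
    have h1 : σ ^ b ≤ σ ^ (a-2) := zpow_le_zpow_right₀ hσ.le hb
    have h2 : σ ^ a = σ ^ (a-2) * σ^(2:ℤ) := by
      rw [← zpow_add₀ (ne_of_gt hσ0)]; ring_nf
    have h3 : σ ^ ((4:ℕ):ℤ) = σ^(2:ℤ) * σ^(2:ℤ) := by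
      rw [← zpow_add₀ (ne_of_gt hσ0)]; norm_num
    have h4 : σ ^ (2:ℤ) < σ ^ (a-2) := zpow_lt_zpow_right₀ hσ (by omega)
    have h5 : (1:ℝ) < σ ^ (2:ℤ) := one_lt_zpow₀ hσ (by norm_num)
    rw [h2, h3]
    nlinarith

lemma core_dec (σ : ℝ) (hσ : 1 < σ) (e : ℕ) (a b : ℤ) (ha : (e:ℤ) + 2 ≤ a)
    (hD : (3 ≤ e ∧ a ≤ b) ∨ (e = 2 ∧ a + 2 ≤ b) ∨ (e = 1 ∧ a + 1 ≤ b) ∨ (e = 0 ∧ a + 2 ≤ b)) :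
    σ ^ a + σ ^ (2:ℤ) - σ ^ (e:ℤ) < σ ^ b := by
  have hσ0 : (0:ℝ) < σ := by linarith
  rcases hD with ⟨he, hb⟩ | ⟨he, hb⟩ | ⟨he, hb⟩ | ⟨he, hb⟩
  · have h1 : σ ^ a ≤ σ ^ b := zpow_le_zpow_right₀ hσ.le hb
    have h2 : σ ^ (2:ℤ) < σ ^ (e:ℤ) := zpow_lt_zpow_right₀ hσ (by omega)
    linarith
  · subst he
    have h1 : σ ^ a < σ ^ b := zpow_lt_zpow_right₀ hσ (by omega)
    norm_num
    linarith
  · subst he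
    have h1 : σ ^ (a+1) ≤ σ ^ b := zpow_le_zpow_right₀ hσ.le hb
    have h2 : σ ^ (a+1) = σ ^ a * σ := by
      rw [← zpow_add_one₀ (ne_of_gt hσ0)]
    have h3 : σ ^ (2:ℤ) = σ * σ := by
      rw [show (2:ℤ) = 1 + 1 by norm_num, zpow_add₀ (ne_of_gt hσ0)]; norm_num
    have h4 : σ < σ ^ a := by
      calc σ = σ ^ (1:ℤ) := (zpow_one σ).symm
      _ < σ ^ a := zpow_lt_zpow_right₀ hσ (by omega)
    have h5 : σ ^ ((1:ℕ):ℤ) = σ := by norm_num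
    rw [h5, h3]
    nlinarith
  · subst he
    have h1 : σ ^ (a+2) ≤ σ ^ b := zpow_le_zpow_right₀ hσ.le hb
    have h2 : σ ^ (a+2) = σ ^ a * σ^(2:ℤ) := by
      rw [← zpow_add₀ (ne_of_gt hσ0)]
    have h4 : σ ^ (2:ℤ) ≤ σ ^ a := zpow_le_zpow_right₀ hσ.le (by omega)
    have h5 : (1:ℝ) < σ ^ (2:ℤ) := one_lt_zpow₀ hσ (by norm_num)
    have h6 : σ ^ ((0:ℕ):ℤ) = 1 := by norm_num
    rw [h6]; rw [h2] at h1
    nlinarith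

lemma tval_pos (s e : ℕ) (hs : 2 ≤ s) : 0 < tval s e := by
  have : (0:ℝ) < s := by positivity
  exact Real.rpow_pos_of_pos this _

lemma den_factor_pos (s : ℕ) (hs : 2 ≤ s) (u : ℤ) (hu : 0 ≤ u) :
    0 < (s:ℝ) ^ (u + 1) - 1 := by
  have h1 : (1:ℝ) < (s:ℝ) := by exact_mod_cast by omega
  have := one_lt_zpow₀ h1 (show 0 < u + 1 by omega)
  linarith

lemma delta_pos (n s e : ℕ) (hs : 2 ≤ s) (i : ℤ) (hin : i ≤ (n:ℤ) - 1) :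
    0 < delta n s e i := by
  have h1 : (1:ℝ) < (s:ℝ) := by exact_mod_cast by omega
  unfold delta
  apply div_pos
  · apply mul_pos
    · apply Finset.prod_pos
      intro u hu
      have := tval_pos s e hs
      have := zpow_pos (show (0:ℝ) < s by linarith) ((n:ℤ) - u - 1)
      nlinarith
    · apply Finset.prod_pos
      intro u hu
      simp only [Finset.mem_Icc] at hu
      have := one_lt_zpow₀ h1 (show 0 < (n:ℤ) - u by omega)
      linarith
  · apply Finset.prod_pos
    intro u hu
    simp only [Finset.mem_Icc] at hu
    exact den_factor_pos s hs u hu.1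

lemma delta_succ (n s e : ℕ) (hs : 2 ≤ s) (i : ℤ) (hi : 0 ≤ i) :
    delta n s e (i+1) = delta n s e i *
      (((s:ℝ) ^ ((n:ℤ) - (i+1) - 1) * tval s e + 1) * ((s:ℝ) ^ ((n:ℤ) - (i+1)) - 1) /
        ((s:ℝ) ^ ((i+1) + 1) - 1)) := by
  have hins : Finset.Icc (0:ℤ) (i+1) = insert (i+1) (Finset.Icc 0 i) := by
    ext x
    simp only [Finset.mem_Icc, Finset.mem_insert]
    omega
  have hnot : (i+1) ∉ Finset.Icc (0:ℤ) i := by simp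
  have hden : ∀ u ∈ Finset.Icc (0:ℤ) i, ((s:ℝ) ^ (u + 1) - 1) ≠ 0 := by
    intro u hu
    simp only [Finset.mem_Icc] at hu
    exact ne_of_gt (den_factor_pos s hs u hu.1)
  have hdenprod : (∏ u ∈ Finset.Icc (0:ℤ) i, ((s:ℝ) ^ (u + 1) - 1)) ≠ 0 :=
    Finset.prod_ne_zero_iff.mpr hden
  have hden1 : ((s:ℝ) ^ ((i+1) + 1) - 1) ≠ 0 := ne_of_gt (den_factor_pos s hs (i+1) (by omega))
  unfold delta
  rw [hins, Finset.prod_insert hnot, Finset.prod_insert hnot, Finset.prod_insert hnot]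
  field_simp

lemma step_core (n s e : ℕ) (σ : ℝ) (hσ : 1 < σ) (hσs : (s:ℝ) = σ^(2:ℕ))
    (hσt : tval s e = σ^(e:ℕ)) (j : ℤ) :
    ((s:ℝ) ^ ((n:ℤ) - j - 1) * tval s e + 1) * ((s:ℝ) ^ ((n:ℤ) - j) - 1) - ((s:ℝ) ^ (j + 1) - 1)
      = σ ^ (2*(n:ℤ)-2*j-2) *
        ((σ ^ (2*(n:ℤ)-2*j+(e:ℤ)) + σ^(2:ℤ) - σ^((e:ℤ))) - σ ^ (4*j+4-2*(n:ℤ))) := by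
  have hne : σ ≠ 0 := by linarith
  have hX : (s:ℝ)^((n:ℤ)-j-1) * tval s e = σ^(2*((n:ℤ)-j-1)+(e:ℤ)) := by
    rw [hσs, hσt, zpow_two_mul', ← zpow_natCast σ e, ← zpow_add₀ hne]
  have hY : (s:ℝ)^((n:ℤ)-j) = σ^(2*((n:ℤ)-j)) := by rw [hσs, zpow_two_mul']
  have hZ : (s:ℝ)^(j+1) = σ^(2*(j+1)) := by rw [hσs, zpow_two_mul']
  rw [hX, hY, hZ]
  have E : ∀ x y z : ℤ, x + y = z → σ^x * σ^y = σ^z := by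
    intro x y z hxyz; rw [← zpow_add₀ hne, hxyz]
  rw [mul_sub (σ ^ (2*(n:ℤ)-2*j-2)), mul_sub (σ ^ (2*(n:ℤ)-2*j-2))]
  rw [E (2*(n:ℤ)-2*j-2) (4*j+4-2*(n:ℤ)) (2*(j+1)) (by ring),
      E (2*(n:ℤ)-2*j-2) ((e:ℤ)) (2*((n:ℤ)-j-1)+(e:ℤ)) (by ring),
      mul_add (σ ^ (2*(n:ℤ)-2*j-2)),
      E (2*(n:ℤ)-2*j-2) ((2:ℤ)) (2*((n:ℤ)-j)) (by ring)]
  have E4 : σ ^ (2*(n:ℤ)-2*j-2) * σ ^ (2*(n:ℤ)-2*j+(e:ℤ))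
      = σ^(2*((n:ℤ)-j-1)+(e:ℤ)) * σ^(2*((n:ℤ)-j)) := by
    rw [← zpow_add₀ hne, ← zpow_add₀ hne]; congr 1; ring
  rw [E4]; ring

lemma delta_step_lt (n s e : ℕ) (hs : 2 ≤ s) (σ : ℝ) (hσ : 1 < σ)
    (hσs : (s:ℝ) = σ^(2:ℕ)) (hσt : tval s e = σ^(e:ℕ)) (j : ℤ) (hj1 : 1 ≤ j)
    (hjn : j ≤ (n:ℤ) - 1)
    (hcore : σ ^ (4*j+4-2*(n:ℤ)) < σ ^ (2*(n:ℤ)-2*j+(e:ℤ)) + σ^(2:ℤ) - σ^((e:ℤ))) :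
    delta n s e (j-1) < delta n s e j := by
  have hrec := delta_succ n s e hs (j-1) (by omega)
  have hj : j - 1 + 1 = j := by ring
  rw [hj] at hrec
  have hd0 : 0 < delta n s e (j-1) := delta_pos n s e hs (j-1) (by omega)
  have hden : 0 < (s:ℝ) ^ (j + 1) - 1 := den_factor_pos s hs j (by omega)
  have hkey := step_core n s e σ hσ hσs hσt j
  have hnum : ((s:ℝ) ^ (j + 1) - 1) <
      ((s:ℝ) ^ ((n:ℤ) - j - 1) * tval s e + 1) * ((s:ℝ) ^ ((n:ℤ) - j) - 1) := by
    nlinarith [zpow_pos (show (0:ℝ) < σ by linarith) (2*(n:ℤ)-2*j-2)]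
  have hR : 1 < ((s:ℝ) ^ ((n:ℤ) - j - 1) * tval s e + 1) * ((s:ℝ) ^ ((n:ℤ) - j) - 1) /
      ((s:ℝ) ^ (j + 1) - 1) := (one_lt_div hden).mpr hnum
  calc delta n s e (j-1) = delta n s e (j-1) * 1 := (mul_one _).symm
  _ < _ := by rw [hrec]; exact mul_lt_mul_of_pos_left hR hd0

lemma delta_step_gt (n s e : ℕ) (hs : 2 ≤ s) (σ : ℝ) (hσ : 1 < σ)
    (hσs : (s:ℝ) = σ^(2:ℕ)) (hσt : tval s e = σ^(e:ℕ)) (j : ℤ) (hj1 : 1 ≤ j)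
    (hjn : j ≤ (n:ℤ) - 1)
    (hcore : σ ^ (2*(n:ℤ)-2*j+(e:ℤ)) + σ^(2:ℤ) - σ^((e:ℤ)) < σ ^ (4*j+4-2*(n:ℤ))) :
    delta n s e j < delta n s e (j-1) := by
  have hrec := delta_succ n s e hs (j-1) (by omega)
  have hj : j - 1 + 1 = j := by ring
  rw [hj] at hrec
  have hd0 : 0 < delta n s e (j-1) := delta_pos n s e hs (j-1) (by omega)
  have hden : 0 < (s:ℝ) ^ (j + 1) - 1 := den_factor_pos s hs j (by omega)
  have hkey := step_core n s e σ hσ hσs hσt j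
  have hnum : ((s:ℝ) ^ ((n:ℤ) - j - 1) * tval s e + 1) * ((s:ℝ) ^ ((n:ℤ) - j) - 1) <
      ((s:ℝ) ^ (j + 1) - 1) := by
    nlinarith [zpow_pos (show (0:ℝ) < σ by linarith) (2*(n:ℤ)-2*j-2)]
  have hR : ((s:ℝ) ^ ((n:ℤ) - j - 1) * tval s e + 1) * ((s:ℝ) ^ ((n:ℤ) - j) - 1) /
      ((s:ℝ) ^ (j + 1) - 1) < 1 := (div_lt_one hden).mpr hnum
  calc delta n s e j = delta n s e (j-1) *
      (((s:ℝ) ^ ((n:ℤ) - j - 1) * tval s e + 1) * ((s:ℝ) ^ ((n:ℤ) - j) - 1) /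
        ((s:ℝ) ^ (j + 1) - 1)) := hrec
  _ < delta n s e (j-1) * 1 := mul_lt_mul_of_pos_left hR hd0
  _ = delta n s e (j-1) := mul_one _

lemma strictMonoOn_Icc_int {f : ℤ → ℝ} {a b : ℤ}
    (h : ∀ i, a ≤ i → i < b → f i < f (i + 1)) :
    StrictMonoOn f (Set.Icc a b) := by
  intro x hx y hy hxy
  obtain ⟨hax, hxb⟩ := Set.mem_Icc.mp hx
  obtain ⟨hay, hyb⟩ := Set.mem_Icc.mp hy
  have key : ∀ k : ℕ, x + 1 + k ≤ b → f x < f (x + 1 + k) := by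
    intro k
    induction k with
    | zero => intro hb; simpa using h x hax (by omega)
    | succ m ih =>
      intro hb
      have h1 : f x < f (x + 1 + m) := ih (by omega)
      have h2 : f (x + 1 + m) < f (x + 1 + m + 1) := h (x + 1 + m) (by omega) (by omega)
      have : x + 1 + (m + 1 : ℕ) = x + 1 + m + 1 := by push_cast; ring
      rw [this]
      exact lt_trans h1 h2
  have hk : ∃ k : ℕ, y = x + 1 + k := ⟨(y - x - 1).toNat, by omega⟩
  obtain ⟨k, rfl⟩ := hk
  exact key k hyb

lemma strictAntiOn_Icc_int {f : ℤ → ℝ} {a b : ℤ}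
    (h : ∀ i, a ≤ i → i < b → f (i + 1) < f i) :
    StrictAntiOn f (Set.Icc a b) := by
  intro x hx y hy hxy
  obtain ⟨hax, hxb⟩ := Set.mem_Icc.mp hx
  obtain ⟨hay, hyb⟩ := Set.mem_Icc.mp hy
  have key : ∀ k : ℕ, x + 1 + k ≤ b → f (x + 1 + k) < f x := by
    intro k
    induction k with
    | zero => intro hb; simpa using h x hax (by omega)
    | succ m ih =>
      intro hb
      have h1 : f (x + 1 + m) < f x := ih (by omega)
      have h2 : f (x + 1 + m + 1) < f (x + 1 + m) := h (x + 1 + m) (by omega) (by omega)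
      have : x + 1 + (m + 1 : ℕ) = x + 1 + m + 1 := by push_cast; ring
      rw [this]
      exact lt_trans h2 h1
  have hk : ∃ k : ℕ, y = x + 1 + k := ⟨(y - x - 1).toNat, by omega⟩
  obtain ⟨k, rfl⟩ := hk
  exact key k hyb

theorem stmt_0 (n s e : ℕ) (hn : 3 ≤ n) (hs : 2 ≤ s) (he : e ≤ 4)
    (h : e ≠ 2 ∨ ¬ ((3:ℤ) ∣ (2 * (n:ℤ) - 1)))
    (imax : ℤ)
    (himax : imax = if e ≤ 2 then ⌊(2 * (n:ℝ) - 2 + (e:ℝ)/2) / 3⌋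
                    else ⌈(2 * (n:ℝ) - 2 + (e:ℝ)/2) / 3⌉ - 1) :
    StrictMonoOn (delta n s e) (Set.Icc 0 imax) ∧
    StrictAntiOn (delta n s e) (Set.Icc imax ((n:ℤ) - 1)) ∧
    ∀ i ∈ Set.Icc (0:ℤ) ((n:ℤ) - 1), i ≠ imax → delta n s e i < delta n s e imax := by
  set σ := Real.sqrt s with hσdef
  have hs0 : (0:ℝ) < s := by positivity
  have hs1 : (1:ℝ) ≤ s := by exact_mod_cast by omega
  have hσ : 1 < σ := by
    rw [hσdef, show (1:ℝ) = Real.sqrt 1 by simp]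
    exact Real.sqrt_lt_sqrt (by norm_num) (by exact_mod_cast by omega)
  have hσs : (s:ℝ) = σ^(2:ℕ) := (Real.sq_sqrt hs0.le).symm
  have hσt : tval s e = σ^(e:ℕ) := by
    rw [hσdef, Real.sqrt_eq_rpow, ← Real.rpow_natCast ((s:ℝ) ^ ((1:ℝ)/2)) e,
      ← Real.rpow_mul hs0.le]
    unfold tval
    ring_nf
  have hnR : (3:ℝ) ≤ (n:ℝ) := by exact_mod_cast hn
  have heR : (e:ℝ) ≤ 4 := by exact_mod_cast he
  have he0R : (0:ℝ) ≤ (e:ℝ) := by positivity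
  -- bounds on imax
  have himax0 : 0 ≤ imax := by
    rw [himax]
    split_ifs with h2
    · exact Int.le_floor.mpr (by push_cast; linarith)
    · have : (0:ℤ) < ⌈(2 * (n:ℝ) - 2 + (e:ℝ)/2) / 3⌉ := Int.lt_ceil.mpr (by push_cast; linarith)
      omega
  have himaxn : imax ≤ (n:ℤ) - 1 := by
    rw [himax]
    split_ifs with h2
    · have : ⌊(2 * (n:ℝ) - 2 + (e:ℝ)/2) / 3⌋ < (n:ℤ) := Int.floor_lt.mpr (by push_cast; linarith)
      omega
    · have : ⌈(2 * (n:ℝ) - 2 + (e:ℝ)/2) / 3⌉ ≤ (n:ℤ) := Int.ceil_le.mpr (by push_cast; linarith)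
      omega
  -- characterization of being at most / above imax
  have hinc : ∀ j : ℤ, 1 ≤ j → j ≤ imax → delta n s e (j-1) < delta n s e j := by
    intro j hj1 hjm
    have hjn : j ≤ (n:ℤ) - 1 := le_trans hjm himaxn
    apply delta_step_lt n s e hs σ hσ hσs hσt j hj1 hjn
    apply core_inc σ hσ e _ _ (by omega)
    rw [himax] at hjm
    by_cases h2 : e ≤ 2
    · rw [if_pos h2] at hjm
      have hD : (6*j : ℤ) ≤ 4*(n:ℤ) - 4 + (e:ℤ) := by
        have hr : (j:ℝ) ≤ (2 * (n:ℝ) - 2 + (e:ℝ)/2) / 3 := Int.le_floor.mp hjm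
        have : ((6*j : ℤ):ℝ) ≤ ((4*(n:ℤ) - 4 + (e:ℤ) : ℤ):ℝ) := by push_cast; linarith
        exact_mod_cast this
      interval_cases e
      · exact Or.inl ⟨by omega, by omega⟩
      · exact Or.inl ⟨by omega, by omega⟩
      · have hnd : ¬ ((3:ℤ) ∣ (2 * (n:ℤ) - 1)) := h.resolve_left (by simp)
        refine Or.inr (Or.inl ⟨rfl, ?_⟩)
        rcases em ((3:ℤ) ∣ (2 * (n:ℤ) - 1)) with hd | hd
        · exact absurd hd hnd
        · omega
    · rw [if_neg h2] at hjm
      have hD : (6*j : ℤ) ≤ 4*(n:ℤ) - 5 + (e:ℤ) := by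
        have hr : (j:ℝ) < (2 * (n:ℝ) - 2 + (e:ℝ)/2) / 3 := by
          have := Int.lt_ceil.mp (show j < ⌈(2 * (n:ℝ) - 2 + (e:ℝ)/2) / 3⌉ by omega)
          exact this
        have : ((6*j : ℤ):ℝ) < ((4*(n:ℤ) - 4 + (e:ℤ) : ℤ):ℝ) := by push_cast; linarith
        have h6 : (6*j : ℤ) < 4*(n:ℤ) - 4 + (e:ℤ) := by exact_mod_cast this
        omega
      interval_cases e
      · exact Or.inr (Or.inr (Or.inl ⟨rfl, by omega⟩))
      · refine Or.inr (Or.inr (Or.inr ⟨rfl, ?_⟩)); omega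
  have hdec : ∀ j : ℤ, imax + 1 ≤ j → j ≤ (n:ℤ) - 1 → delta n s e j < delta n s e (j-1) := by
    intro j hjm hjn
    have hj1 : 1 ≤ j := by omega
    apply delta_step_gt n s e hs σ hσ hσs hσt j hj1 hjn
    apply core_dec σ hσ e _ _ (by omega)
    rw [himax] at hjm
    by_cases h2 : e ≤ 2
    · rw [if_pos h2] at hjm
      have hD : 4*(n:ℤ) - 3 + (e:ℤ) ≤ 6*j := by
        have hr : (2 * (n:ℝ) - 2 + (e:ℝ)/2) / 3 < (j:ℝ) := by
          have := Int.floor_lt.mp (show ⌊(2 * (n:ℝ) - 2 + (e:ℝ)/2) / 3⌋ < j by omega)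
          exact this
        have : ((4*(n:ℤ) - 4 + (e:ℤ) : ℤ):ℝ) < ((6*j : ℤ):ℝ) := by push_cast; linarith
        have h6 : 4*(n:ℤ) - 4 + (e:ℤ) < 6*j := by exact_mod_cast this
        omega
      interval_cases e
      · exact Or.inr (Or.inr (Or.inr ⟨rfl, by omega⟩))
      · exact Or.inr (Or.inr (Or.inl ⟨rfl, by omega⟩))
      · exact Or.inr (Or.inl ⟨rfl, by omega⟩)
    · rw [if_neg h2] at hjm
      have hD : 4*(n:ℤ) - 4 + (e:ℤ) ≤ 6*j := by
        have hr : (2 * (n:ℝ) - 2 + (e:ℝ)/2) / 3 ≤ (j:ℝ) := by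
          have := Int.ceil_le.mp (show ⌈(2 * (n:ℝ) - 2 + (e:ℝ)/2) / 3⌉ ≤ j by omega)
          exact this
        have : ((4*(n:ℤ) - 4 + (e:ℤ) : ℤ):ℝ) ≤ ((6*j : ℤ):ℝ) := by push_cast; linarith
        exact_mod_cast this
      exact Or.inl ⟨by omega, by omega⟩
  have hmono : StrictMonoOn (delta n s e) (Set.Icc 0 imax) := by
    apply strictMonoOn_Icc_int
    intro i hi0 him
    have := hinc (i+1) (by omega) (by omega)
    simpa using this
  have hanti : StrictAntiOn (delta n s e) (Set.Icc imax ((n:ℤ) - 1)) := by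
    apply strictAntiOn_Icc_int
    intro i hi0 him
    have := hdec (i+1) (by omega) (by omega)
    simpa using this
  refine ⟨hmono, hanti, ?_⟩
  intro i hi hne
  obtain ⟨hi0, hin⟩ := Set.mem_Icc.mp hi
  rcases lt_or_gt_of_ne hne with hlt | hgt
  · exact hmono (Set.mem_Icc.mpr ⟨hi0, by omega⟩) (Set.mem_Icc.mpr ⟨himax0, le_refl _⟩) hlt
  · exact hanti (Set.mem_Icc.mpr ⟨le_refl _, himaxn⟩) (Set.mem_Icc.mpr ⟨by omega, hin⟩) hgt
end

section
/- Let 0 ≤ i < j ≤ n−1. If δ(i) ≥ δ(j), then 2n + e/2 < 3(i+j+3)/2. -/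
open Finset

lemma rpow_sum_aux (x : ℝ) (hx : 0 < x) (S : Finset ℤ) (g : ℤ → ℝ) :
    x ^ (∑ u ∈ S, g u) = ∏ u ∈ S, x ^ g u := by
  induction S using Finset.cons_induction with
  | empty => simp
  | cons a s ha ih => rw [Finset.sum_cons, Finset.prod_cons, Real.rpow_add hx, ih]

lemma gauss_Ioc (i : ℤ) : ∀ j : ℤ, i ≤ j →
    ∑ u ∈ Finset.Ioc i j, (u:ℝ) = ((j:ℝ) - i) * ((i:ℝ) + j + 1) / 2 := by
  refine Int.le_induction ?_ ?_
  · simp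
  · intro j hij ih
    have hins : Finset.Ioc i (j+1) = insert (j+1) (Finset.Ioc i j) := by
      ext u; simp only [Finset.mem_Ioc, Finset.mem_insert]; omega
    rw [hins, Finset.sum_insert (by simp), ih]
    push_cast; ring

theorem stmt_2 (n s e : ℕ) (hn : 3 ≤ n) (hs : 2 ≤ s) (he : e ≤ 4)
    (i j : ℤ) (hi : 0 ≤ i) (hij : i < j) (hj : j ≤ (n:ℤ) - 1)
    (h : delta n s e i ≥ delta n s e j) :
    2 * (n:ℝ) + (e:ℝ)/2 < 3 * ((i:ℝ) + (j:ℝ) + 3) / 2 := by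
  have hs0 : (0:ℝ) < s := by positivity
  have hs1 : (1:ℝ) < s := by exact_mod_cast Nat.lt_of_lt_of_le one_lt_two hs
  have hs2 : (2:ℝ) ≤ s := by exact_mod_cast hs
  have ht0 : 0 < tval s e := Real.rpow_pos_of_pos hs0 _
  have ht1 : 1 ≤ tval s e :=
    Real.one_le_rpow hs1.le (by positivity)
  set t := tval s e with htdef
  -- positivity of the factors
  have hfac1 : ∀ u : ℤ, (0:ℝ) < (s:ℝ) ^ ((n:ℤ) - u - 1) * t + 1 := by
    intro u
    have := zpow_pos hs0 ((n:ℤ) - u - 1)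
    nlinarith
  have hfac2 : ∀ u : ℤ, u ≤ (n:ℤ) - 1 → (0:ℝ) < (s:ℝ) ^ ((n:ℤ) - u) - 1 := by
    intro u hu
    have : (1:ℝ) < (s:ℝ) ^ ((n:ℤ) - u) := one_lt_zpow₀ hs1 (by omega)
    linarith
  have hfac3 : ∀ u : ℤ, 0 ≤ u → (0:ℝ) < (s:ℝ) ^ (u + 1) - 1 := by
    intro u hu
    have : (1:ℝ) < (s:ℝ) ^ (u + 1) := one_lt_zpow₀ hs1 (by omega)
    linarith
  -- delta i is positive
  have hdpos : 0 < delta n s e i := by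
    rw [delta]
    apply div_pos
    · apply mul_pos
      · exact Finset.prod_pos fun u hu => hfac1 u
      · exact Finset.prod_pos fun u hu => hfac2 u (by
          have := (Finset.mem_Icc.mp hu).2; omega)
    · exact Finset.prod_pos fun u hu => hfac3 u (Finset.mem_Icc.mp hu).1
  -- the ratio factor
  set F : ℤ → ℝ := fun u =>
    ((s:ℝ) ^ ((n:ℤ) - u - 1) * t + 1) * ((s:ℝ) ^ ((n:ℤ) - u) - 1) / ((s:ℝ) ^ (u + 1) - 1)
    with hF
  -- split the products
  have hsplit : delta n s e j = delta n s e i * ∏ u ∈ Finset.Ioc i j, F u := by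
    have hunion : Finset.Icc (0:ℤ) j = Finset.Icc (0:ℤ) i ∪ Finset.Ioc i j := by
      ext u; simp only [Finset.mem_Icc, Finset.mem_union, Finset.mem_Ioc]; omega
    have hdisj : Disjoint (Finset.Icc (0:ℤ) i) (Finset.Ioc i j) := by
      rw [Finset.disjoint_left]
      intro u hu hu'
      have := (Finset.mem_Icc.mp hu).2
      have := (Finset.mem_Ioc.mp hu').1
      omega
    rw [delta, delta, hunion, Finset.prod_union hdisj, Finset.prod_union hdisj,
      Finset.prod_union hdisj, hF, Finset.prod_div_distrib, Finset.prod_mul_distrib]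
    ring
  -- the product is at most 1
  have hprod_le : ∏ u ∈ Finset.Ioc i j, F u ≤ 1 := by
    by_contra hc
    push_neg at hc
    have := (lt_mul_iff_one_lt_right hdpos).mpr hc
    rw [← hsplit] at this
    linarith [h]
  -- key pointwise lower bound
  have hkey : ∀ u ∈ Finset.Ioc i j,
      (s:ℝ) ^ (2*(n:ℤ) - 3*u - 3) * t < F u := by
    intro u hu
    obtain ⟨hu1, hu2⟩ := Finset.mem_Ioc.mp hu
    have hu0 : 0 ≤ u := by omega
    have hun : u ≤ (n:ℤ) - 1 := le_trans hu2 hj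
    set A : ℝ := (s:ℝ) ^ ((n:ℤ) - u - 1) with hA
    set B : ℝ := (s:ℝ) ^ ((n:ℤ) - u) with hB
    set C : ℝ := (s:ℝ) ^ (u + 1) with hC
    set D : ℝ := (s:ℝ) ^ (2*(n:ℤ) - 3*u - 3) with hD
    have hC1 : 0 < C - 1 := hfac3 u hu0
    rw [hF, lt_div_iff₀ hC1]
    show D * t * (C - 1) < (A * t + 1) * (B - 1)
    have hBe : B = A * (s:ℝ) := by
      rw [hB, hA, ← zpow_add_one₀ (ne_of_gt hs0)]
      congr 1
      ring
    have hDC : D * C = A * A := by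
      rw [hD, hC, hA, ← zpow_add₀ (ne_of_gt hs0), ← zpow_add₀ (ne_of_gt hs0)]
      congr 1; ring
    have hA1 : (1:ℝ) ≤ A := one_le_zpow₀ hs1.le (by omega)
    have hD0 : (0:ℝ) < D := zpow_pos hs0 _
    have h5 : D * t * C = A * A * t := by rw [mul_right_comm, hDC]
    have h1 : (0:ℝ) ≤ ((s:ℝ) - 2) * (A * A * t) := by
      apply mul_nonneg (by linarith)
      positivity
    have h2 : (0:ℝ) ≤ (A - 1) * (A * t) := by
      apply mul_nonneg (by linarith)
      positivity
    have h3 : (0:ℝ) < D * t := mul_pos hD0 ht0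
    have h4 : (2:ℝ) ≤ A * s := by nlinarith
    rw [hBe]
    nlinarith [h1, h2, h3, h4, h5]
  -- strict product inequality
  have hne : (Finset.Ioc i j).Nonempty := ⟨j, Finset.mem_Ioc.mpr ⟨hij, le_refl j⟩⟩
  have hprod_lt : ∏ u ∈ Finset.Ioc i j, ((s:ℝ) ^ (2*(n:ℤ) - 3*u - 3) * t)
      < ∏ u ∈ Finset.Ioc i j, F u := by
    apply Finset.prod_lt_prod_of_nonempty _ hkey hne
    intro u hu
    have := zpow_pos hs0 (2*(n:ℤ) - 3*u - 3)
    positivity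
  -- rewrite lower-bound product as a single rpow
  have hfac : ∀ u : ℤ, (s:ℝ) ^ (2*(n:ℤ) - 3*u - 3) * t
      = (s:ℝ) ^ ((2*(n:ℝ) - 3*(u:ℝ) - 3) + (e:ℝ)/2) := by
    intro u
    rw [htdef, tval, ← Real.rpow_intCast (s:ℝ) (2*(n:ℤ) - 3*u - 3), ← Real.rpow_add hs0]
    congr 1
    push_cast; ring
  have hrw : ∏ u ∈ Finset.Ioc i j, ((s:ℝ) ^ (2*(n:ℤ) - 3*u - 3) * t)
      = (s:ℝ) ^ (∑ u ∈ Finset.Ioc i j, ((2*(n:ℝ) - 3*(u:ℝ) - 3) + (e:ℝ)/2)) := by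
    rw [rpow_sum_aux _ hs0]
    exact Finset.prod_congr rfl fun u _ => hfac u
  -- so the exponent sum is negative
  have hsum_neg : (∑ u ∈ Finset.Ioc i j, ((2*(n:ℝ) - 3*(u:ℝ) - 3) + (e:ℝ)/2)) < 0 := by
    have hlt1 : (s:ℝ) ^ (∑ u ∈ Finset.Ioc i j, ((2*(n:ℝ) - 3*(u:ℝ) - 3) + (e:ℝ)/2))
        < (s:ℝ) ^ (0:ℝ) := by
      rw [Real.rpow_zero, ← hrw]
      exact lt_of_lt_of_le hprod_lt hprod_le
    exact (Real.rpow_lt_rpow_left_iff hs1).mp hlt1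
  -- compute the sum
  have hcard : ((Finset.Ioc i j).card : ℝ) = (j:ℝ) - i := by
    rw [Int.card_Ioc]
    rw [show (((j - i).toNat : ℕ) : ℝ) = (((j - i).toNat : ℤ) : ℝ) by push_cast; ring]
    rw [Int.toNat_of_nonneg (by omega)]
    push_cast; ring
  have hform : ∑ u ∈ Finset.Ioc i j, ((2*(n:ℝ) - 3*(u:ℝ) - 3) + (e:ℝ)/2)
      = ∑ u ∈ Finset.Ioc i j, ((2*(n:ℝ) - 3 + (e:ℝ)/2) - 3*(u:ℝ)) :=
    Finset.sum_congr rfl fun u _ => by ring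
  rw [hform, Finset.sum_sub_distrib, Finset.sum_const, ← Finset.mul_sum,
    gauss_Ioc i j hij.le, nsmul_eq_mul, hcard] at hsum_neg
  have hji : (0:ℝ) < (j:ℝ) - i := by
    have : (i:ℝ) < (j:ℝ) := by exact_mod_cast hij
    linarith
  nlinarith [hsum_neg, hji]
end

section
/- Let 0 ≤ i < j ≤ n−1. If δ(i) ≤ δ(j), then 2n + e/2 > 3(i+j+1)/2. -/
open Finset

lemma aux_sum_ioc (c : ℝ) (i : ℤ) : ∀ j : ℤ, i ≤ j →
    ∑ u ∈ Finset.Ioc i j, (c - 3*(u:ℝ)) = ((j:ℝ) - i) * (c - 3*((i:ℝ)+j+1)/2) := by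
  refine Int.le_induction ?_ ?_
  · simp
  · intro k hk ih
    have hins : Finset.Ioc i (k+1) = insert (k+1) (Finset.Ioc i k) := by
      ext a; simp only [Finset.mem_Ioc, Finset.mem_insert]; omega
    rw [hins, Finset.sum_insert (by simp), ih]
    push_cast
    ring

set_option maxHeartbeats 1000000 in
theorem stmt_3 (n s e : ℕ) (hn : 3 ≤ n) (hs : 2 ≤ s) (he : e ≤ 4)
    (i j : ℤ) (hi : 0 ≤ i) (hij : i < j) (hj : j ≤ (n:ℤ) - 1)
    (h : delta n s e i ≤ delta n s e j) :
    2 * (n:ℝ) + (e:ℝ)/2 > 3 * ((i:ℝ) + (j:ℝ) + 1) / 2 := by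
  have hx2 : (2:ℝ) ≤ (s:ℝ) := by exact_mod_cast hs
  have hx1 : (1:ℝ) < (s:ℝ) := by linarith
  have hx0 : (0:ℝ) < (s:ℝ) := by linarith
  set x : ℝ := (s:ℝ) with hxdef
  have hzp : ∀ m : ℤ, x ^ m = x ^ (m:ℝ) := fun m => (Real.rpow_intCast x m).symm
  set F : ℤ → ℝ := fun u => x ^ ((n:ℤ) - u - 1) * tval s e + 1 with hFdef
  set G : ℤ → ℝ := fun u => x ^ ((n:ℤ) - u) - 1 with hGdef
  set H : ℤ → ℝ := fun u => x ^ (u + 1) - 1 with hHdef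
  -- positivity
  have hFpos : ∀ u : ℤ, 0 < F u := by
    intro u
    have : (0:ℝ) < x ^ ((n:ℤ) - u - 1) * tval s e :=
      mul_pos (zpow_pos hx0 _) (Real.rpow_pos_of_pos hx0 _)
    simp only [hFdef]; linarith
  have hGpos : ∀ u : ℤ, u ≤ (n:ℤ) - 1 → 0 < G u := by
    intro u hu
    have h1 : x ^ ((1:ℤ):ℝ) ≤ x ^ (((n:ℤ) - u : ℤ):ℝ) := by
      apply (Real.rpow_le_rpow_left_iff hx1).mpr
      exact_mod_cast (by omega : (1:ℤ) ≤ (n:ℤ) - u)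
    rw [Int.cast_one, Real.rpow_one] at h1
    rw [← hzp] at h1
    simp only [hGdef]; linarith
  have hHpos : ∀ u : ℤ, 0 ≤ u → 0 < H u := by
    intro u hu
    have h1 : x ^ ((1:ℤ):ℝ) ≤ x ^ ((u + 1 : ℤ):ℝ) := by
      apply (Real.rpow_le_rpow_left_iff hx1).mpr
      exact_mod_cast (by omega : (1:ℤ) ≤ u + 1)
    rw [Int.cast_one, Real.rpow_one] at h1
    rw [← hzp] at h1
    simp only [hHdef]; linarith
  -- product positivity over Icc 0 k, k ≤ n-1
  have hmem : ∀ k : ℤ, k ≤ (n:ℤ) - 1 → ∀ u ∈ Finset.Icc (0:ℤ) k, 0 ≤ u ∧ u ≤ (n:ℤ) - 1 := by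
    intro k hk u hu
    rw [Finset.mem_Icc] at hu
    omega
  have hPF : ∀ k : ℤ, 0 < ∏ u ∈ Finset.Icc (0:ℤ) k, F u :=
    fun k => Finset.prod_pos (fun u _ => hFpos u)
  have hPG : ∀ k : ℤ, k ≤ (n:ℤ) - 1 → 0 < ∏ u ∈ Finset.Icc (0:ℤ) k, G u :=
    fun k hk => Finset.prod_pos (fun u hu => hGpos u (hmem k hk u hu).2)
  have hPH : ∀ k : ℤ, k ≤ (n:ℤ) - 1 → 0 < ∏ u ∈ Finset.Icc (0:ℤ) k, H u :=
    fun k hk => Finset.prod_pos (fun u hu => hHpos u (hmem k hk u hu).1)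
  have hjn : i ≤ (n:ℤ) - 1 := by omega
  -- splitting of products
  have hIcc : ∀ k : ℤ, 0 ≤ k → Finset.Icc (0:ℤ) k = Finset.Ioc (-1) k := by
    intro k hk; ext a; simp only [Finset.mem_Icc, Finset.mem_Ioc]; omega
  have hsplit : ∀ f : ℤ → ℝ, (∏ u ∈ Finset.Icc (0:ℤ) j, f u)
      = (∏ u ∈ Finset.Icc (0:ℤ) i, f u) * ∏ u ∈ Finset.Ioc i j, f u := by
    intro f
    rw [hIcc j (by omega), hIcc i hi,
      ← Finset.Ioc_union_Ioc_eq_Ioc (by omega : (-1:ℤ) ≤ i) hij.le,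
      Finset.prod_union (by
        rw [Finset.disjoint_left]
        intro a h1 h2
        rw [Finset.mem_Ioc] at h1 h2
        omega)]
  -- from h, derive QH ≤ QF * QG
  simp only [delta] at h
  rw [div_le_div_iff₀ (hPH i hjn) (hPH j hj)] at h
  rw [hsplit F, hsplit G, hsplit H] at h
  set QF := ∏ u ∈ Finset.Ioc i j, F u
  set QG := ∏ u ∈ Finset.Ioc i j, G u
  set QH := ∏ u ∈ Finset.Ioc i j, H u
  set PF := ∏ u ∈ Finset.Icc (0:ℤ) i, F u with hPFdef
  set PG := ∏ u ∈ Finset.Icc (0:ℤ) i, G u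
  set PH := ∏ u ∈ Finset.Icc (0:ℤ) i, H u
  have hP : 0 < PF * PG * PH := by
    have := hPF i; have := hPG i hjn; have := hPH i hjn
    positivity
  have hkey : QH ≤ QF * QG := by
    have h2 : (PF * PG * PH) * QH ≤ (PF * PG * PH) * (QF * QG) := by
      calc (PF * PG * PH) * QH = PF * PG * (PH * QH) := by ring
        _ ≤ PF * QF * (PG * QG) * PH := h
        _ = (PF * PG * PH) * (QF * QG) := by ring
    exact le_of_mul_le_mul_left h2 hP
  -- pointwise bound
  have hpt : ∀ u ∈ Finset.Ioc i j,
      F u * G u < H u * x ^ (2*(n:ℝ) + (e:ℝ)/2 - 3*(u:ℝ)) := by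
    intro u hu
    rw [Finset.mem_Ioc] at hu
    have hu1 : (1:ℤ) ≤ u := by omega
    have hu2 : u ≤ (n:ℤ) - 1 := by omega
    have hu1' : (1:ℝ) ≤ (u:ℝ) := by exact_mod_cast hu1
    have hu2' : (u:ℝ) ≤ (n:ℝ) - 1 := by
      have : ((u:ℤ):ℝ) ≤ (((n:ℤ) - 1 : ℤ):ℝ) := by exact_mod_cast hu2
      push_cast at this
      linarith
    set A : ℝ := x ^ ((n:ℝ) - u - 1 + (e:ℝ)/2) with hAdef
    set B : ℝ := x ^ ((n:ℝ) - u) with hBdef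
    set C : ℝ := x ^ ((u:ℝ) + 1) with hCdef
    have hFu : F u = A + 1 := by
      simp only [hFdef, hAdef, tval, ← hxdef]
      rw [hzp, ← Real.rpow_add hx0]
      push_cast
      ring_nf
    have hGu : G u = B - 1 := by
      simp only [hGdef, hBdef]
      rw [hzp]
      push_cast
      ring_nf
    have hCu : H u = C - 1 := by
      simp only [hHdef, hCdef]
      rw [hzp]
      push_cast
      ring_nf
    have hA1 : (1:ℝ) ≤ A := Real.one_le_rpow hx1.le (by have he0 : (0:ℝ) ≤ (e:ℝ) := Nat.cast_nonneg e; linarith)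
    have hB2 : (2:ℝ) ≤ B := by
      have : x ^ (1:ℝ) ≤ B := (Real.rpow_le_rpow_left_iff hx1).mpr (by linarith)
      rw [Real.rpow_one] at this; linarith
    have hCx : x * x ≤ C := by
      have h2 : x ^ (2:ℝ) ≤ C := (Real.rpow_le_rpow_left_iff hx1).mpr (by linarith)
      have : x ^ (2:ℝ) = x * x := by
        rw [show (2:ℝ) = ((2:ℕ):ℝ) by norm_num, Real.rpow_natCast]; ring
      rw [this] at h2; exact h2
    have hApos : (0:ℝ) < A := Real.rpow_pos_of_pos hx0 _
    have hBpos : (0:ℝ) < B := Real.rpow_pos_of_pos hx0 _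
    have hCpos : (0:ℝ) < C := Real.rpow_pos_of_pos hx0 _
    set X : ℝ := x ^ (2*(n:ℝ) + (e:ℝ)/2 - 3*(u:ℝ)) with hXdef
    have hXpos : (0:ℝ) < X := Real.rpow_pos_of_pos hx0 _
    have hABC : X * C = A * B * (x * x) := by
      simp only [hXdef, hCdef, hAdef, hBdef]
      rw [← Real.rpow_add hx0, ← Real.rpow_add hx0]
      have hxx : x * x = x ^ (2:ℝ) := by
        rw [show (2:ℝ) = ((2:ℕ):ℝ) by norm_num, Real.rpow_natCast]; ring
      rw [hxx, ← Real.rpow_add hx0]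
      congr 1
      ring
    rw [hFu, hGu, hCu]
    -- (A+1)(B-1) < (C-1) X
    have hXAB : X ≤ A * B := by
      have h4 : x * x ≤ C := hCx
      nlinarith [mul_pos hApos hBpos]
    have hBAB : B ≤ A * B := by nlinarith
    have hABpos := mul_pos hApos hBpos
    have h4 : (4:ℝ) ≤ x * x := by nlinarith
    have h6 : 4 * (A*B) ≤ X * C := by
      nlinarith [mul_nonneg (by linarith : (0:ℝ) ≤ x*x - 4) hABpos.le]
    nlinarith [h6, hXAB, hBAB, hABpos]
  -- strict product inequality
  have hne : (Finset.Ioc i j).Nonempty := by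
    rw [Finset.nonempty_Ioc]; exact hij
  have hlt : (∏ u ∈ Finset.Ioc i j, (F u * G u))
      < ∏ u ∈ Finset.Ioc i j, (H u * x ^ (2*(n:ℝ) + (e:ℝ)/2 - 3*(u:ℝ))) := by
    refine Finset.prod_lt_prod_of_nonempty ?_ hpt hne
    intro u hu
    rw [Finset.mem_Ioc] at hu
    exact mul_pos (hFpos u) (hGpos u (by omega))
  rw [Finset.prod_mul_distrib, Finset.prod_mul_distrib,
    ← Real.rpow_sum_of_pos hx0] at hlt
  have hQHpos : 0 < QH :=
    Finset.prod_pos (fun u hu => hHpos u (by rw [Finset.mem_Ioc] at hu; omega))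
  have hone : (1:ℝ) < x ^ (∑ u ∈ Finset.Ioc i j, (2*(n:ℝ) + (e:ℝ)/2 - 3*(u:ℝ))) := by
    have : QH * 1 < QH * x ^ (∑ u ∈ Finset.Ioc i j, (2*(n:ℝ) + (e:ℝ)/2 - 3*(u:ℝ))) := by
      rw [mul_one]
      calc QH ≤ QF * QG := hkey
        _ < QH * x ^ (∑ u ∈ Finset.Ioc i j, (2*(n:ℝ) + (e:ℝ)/2 - 3*(u:ℝ))) := hlt
    exact lt_of_mul_lt_mul_left (by linarith [this]) hQHpos.le
  have hsumpos : 0 < ∑ u ∈ Finset.Ioc i j, (2*(n:ℝ) + (e:ℝ)/2 - 3*(u:ℝ)) := by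
    rcases (Real.one_lt_rpow_iff_of_pos hx0).mp hone with ⟨_, hy⟩ | ⟨hlt1, _⟩
    · exact hy
    · linarith
  rw [aux_sum_ioc _ i j hij.le] at hsumpos
  have hji : (1:ℝ) ≤ (j:ℝ) - (i:ℝ) := by
    have : (i:ℝ) + 1 ≤ (j:ℝ) := by exact_mod_cast (by omega : i + 1 ≤ j)
    linarith
  nlinarith [hsumpos, hji]
end

section
/- Let 0 ≤ i < j ≤ n−1. If δ(i) = δ(j), then 2i + j + 4 ≤ 2n + e/2 ≤ i + 2j + 3. -/
open Finset

/-!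
Write `q = √s`. Then `δ(u) / δ(u - 1) = (a + 1) (b - 1) / (c - 1)` with
`a = q ^ (2 (n - u - 1) + e)`, `b = q ^ (2 (n - u))`, `c = q ^ (2 (u + 1))`, and this ratio lies
strictly between `q ^ (4n + e - 6u - 6)` and `q ^ (4n + e - 6u - 2)`. If `δ(i) = δ(j)`, the
product of the ratios over `i < u ≤ j` is `1`, so the sums of these exponents have opposite
signs, which gives `3 (i + j) + 6 ≤ 4n + e ≤ 3 (i + j) + 8`; for `j ≥ i + 2` this is stronger
than the claim.
For `j = i + 1` the claim says `4n + e = 6i + 10`, so only odd `4n + e` must be excluded: then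
`e ∈ {1, 3}`, and `a / b` and `a b / c` are both `q ^ (± 1)`, which is incompatible with
`(a + 1) (b - 1) = c - 1` since `b > 1`.
-/

/-- `δ(u) / δ(u - 1)`, written in terms of `q = √s`, so that `s ^ k = q ^ (2 * k)` and
`t = q ^ e`. -/
noncomputable def deltaRatio (q : ℝ) (n e : ℕ) (u : ℤ) : ℝ :=
  (q ^ (2 * ((n : ℤ) - u - 1) + e) + 1) * (q ^ (2 * ((n : ℤ) - u)) - 1) /
    (q ^ (2 * (u + 1)) - 1)

lemma tval_eq_sqrt_pow (s e : ℕ) : tval s e = √(s : ℝ) ^ e := by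
  rw [tval, Real.sqrt_eq_rpow, ← Real.rpow_natCast, ← Real.rpow_mul (Nat.cast_nonneg _)]
  congr 1
  ring

lemma delta_eq_prod_deltaRatio {s : ℕ} (hs : s ≠ 0) (n e : ℕ) (i : ℤ) :
    delta n s e i = ∏ u ∈ Icc 0 i, deltaRatio √(s : ℝ) n e u := by
  have hq : √(s : ℝ) ≠ 0 := by positivity
  have hpow (k : ℤ) : (s : ℝ) ^ k = √(s : ℝ) ^ (2 * k) := by
    rw [zpow_mul, zpow_two, ← sq, Real.sq_sqrt (Nat.cast_nonneg _)]
  simp only [delta, deltaRatio, ← prod_mul_distrib, ← prod_div_distrib, tval_eq_sqrt_pow,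
    hpow, ← zpow_natCast, ← zpow_add₀ hq]

section deltaRatio

variable {q : ℝ} {n e : ℕ} {u : ℤ}

lemma deltaRatio_pos (hq : 1 < q) (hu : 0 ≤ u) (hun : u ≤ n - 1) : 0 < deltaRatio q n e u :=
  div_pos (mul_pos (by positivity) (sub_pos.2 (one_lt_zpow₀ hq (by omega))))
    (sub_pos.2 (one_lt_zpow₀ hq (by omega)))

lemma deltaRatio_lt (hq : 1 < q) (hq2 : 2 ≤ q ^ 2) (hu : 1 ≤ u) (hun : u ≤ n - 1) :
    deltaRatio q n e u < q ^ (4 * (n : ℤ) + e - 2 - 6 * u) := by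
  have hq0 : q ≠ 0 := by positivity
  unfold deltaRatio
  set p := q ^ 2
  set a := q ^ (2 * ((n : ℤ) - u - 1) + e)
  set b := q ^ (2 * ((n : ℤ) - u))
  set c := q ^ (2 * (u + 1))
  have hqp : q ^ (2 : ℤ) = p := zpow_two q |>.trans (sq q).symm
  have hb : p ≤ b := hqp ▸ zpow_le_zpow_right₀ hq.le (by omega)
  have hab : b ≤ a * p := by
    rw [← hqp, ← zpow_add₀ hq0]
    exact zpow_le_zpow_right₀ hq.le (by omega)
  have hc : p ^ 2 ≤ c := by
    rw [← hqp, ← zpow_natCast, ← zpow_mul]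
    exact zpow_le_zpow_right₀ hq.le (by omega)
  have hK : q ^ (4 * (n : ℤ) + e - 2 - 6 * u) * c = a * b * p := by
    rw [← hqp, ← zpow_add₀ hq0, ← zpow_add₀ hq0, ← zpow_add₀ hq0]
    congr 1
    ring
  have ha : 0 < a := by nlinarith
  have hc0 : 0 < c := by nlinarith
  -- `(a + 1) (b - 1) < a b + a (p - 1) ≤ a b (p - 1/p) ≤ a b p (1 - 1/c)`
  have h1 : (a + 1) * (b - 1) < a * b + a * (p - 1) := by nlinarith
  have h2 : p * (a * b + a * (p - 1)) ≤ a * b * (p ^ 2 - 1) := by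
    have : p ^ 2 - p ≤ b * (p ^ 2 - p - 1) := by
      nlinarith [mul_le_mul_of_nonneg_right hb (show 0 ≤ p ^ 2 - p - 1 by nlinarith),
        mul_nonneg (sq_nonneg p) (show 0 ≤ p - 2 by linarith)]
    nlinarith [mul_le_mul_of_nonneg_left this ha.le]
  have h3 : a * b * ((p ^ 2 - 1) * c) ≤ a * b * (p ^ 2 * (c - 1)) :=
    mul_le_mul_of_nonneg_left (by linarith) (mul_nonneg ha.le (by linarith))
  have key : (a + 1) * (b - 1) * c < a * b * p * (c - 1) := by
    nlinarith [mul_lt_mul_of_pos_right h1 hc0, mul_le_mul_of_nonneg_right h2 hc0.le]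
  rw [div_lt_iff₀ (by nlinarith)]
  refine lt_of_mul_lt_mul_right ?_ hc0.le
  calc (a + 1) * (b - 1) * c < a * b * p * (c - 1) := key
    _ = _ := by rw [← hK]; ring

lemma zpow_lt_deltaRatio (hq : 1 < q) (hq2 : 2 ≤ q ^ 2) (hu : 0 ≤ u) (hun : u ≤ n - 1) :
    q ^ (4 * (n : ℤ) + e - 6 - 6 * u) < deltaRatio q n e u := by
  have hq0 : q ≠ 0 := by positivity
  unfold deltaRatio
  set p := q ^ 2
  set a := q ^ (2 * ((n : ℤ) - u - 1) + e)
  set b := q ^ (2 * ((n : ℤ) - u))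
  set c := q ^ (2 * (u + 1))
  have hqp : q ^ (2 : ℤ) = p := zpow_two q |>.trans (sq q).symm
  have hb : p ≤ b := hqp ▸ zpow_le_zpow_right₀ hq.le (by omega)
  have hc : 1 < c := one_lt_zpow₀ hq (by omega)
  have ha : 0 < a := by positivity
  have hK : q ^ (4 * (n : ℤ) + e - 6 - 6 * u) * (p * c) = a * b := by
    rw [← hqp, ← zpow_add₀ hq0, ← zpow_add₀ hq0, ← zpow_add₀ hq0]
    congr 1
    ring
  have key : a * b * (c - 1) < p * c * ((a + 1) * (b - 1)) := by
    have hb0 : 0 < b := by linarith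
    calc a * b * (c - 1) < (a + 1) * b * c := by gcongr <;> linarith
      _ ≤ (a + 1) * (p * (b - 1)) * c := by gcongr; nlinarith
      _ = _ := by ring
  rw [lt_div_iff₀ (by linarith)]
  refine lt_of_mul_lt_mul_left ?_ (by positivity : 0 ≤ p * c)
  calc p * c * (q ^ (4 * (n : ℤ) + e - 6 - 6 * u) * (c - 1)) = a * b * (c - 1) := by
        rw [← hK]; ring
    _ < _ := key

lemma deltaRatio_ne_one (hq : 1 < q) (hun : u ≤ n - 1) (he : e = 1 ∨ e = 3)
    (hd : 4 * (n : ℤ) + e = 6 * u + 3 ∨ 4 * (n : ℤ) + e = 6 * u + 5) :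
    deltaRatio q n e u ≠ 1 := by
  have hq0 : q ≠ 0 := by positivity
  have hb : 1 < q ^ (2 * ((n : ℤ) - u)) := one_lt_zpow₀ hq (by omega)
  have hc : 1 < q ^ (2 * (u + 1)) := one_lt_zpow₀ hq (by omega)
  have ha_eq : q ^ (2 * ((n : ℤ) - u - 1) + e) =
      q ^ (2 * ((n : ℤ) - u)) * q ^ ((e : ℤ) - 2) := by
    rw [← zpow_add₀ hq0]; congr 1; ring
  have hc_eq : q ^ (2 * (u + 1)) = q ^ (2 * ((n : ℤ) - u)) * q ^ ((e : ℤ) - 2) *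
      q ^ (2 * ((n : ℤ) - u)) * q ^ (6 * u + 4 - 4 * (n : ℤ) - e) := by
    rw [← zpow_add₀ hq0, ← zpow_add₀ hq0, ← zpow_add₀ hq0]; congr 1; ring
  have hx : q ^ ((e : ℤ) - 2) = q ∨ q ^ ((e : ℤ) - 2) = q⁻¹ := by
    rcases he with rfl | rfl <;> norm_num
  have hy : q ^ (6 * u + 4 - 4 * (n : ℤ) - e) = q ∨
      q ^ (6 * u + 4 - 4 * (n : ℤ) - e) = q⁻¹ := by
    rcases hd with hd | hd
    · left; rw [show 6 * u + 4 - 4 * (n : ℤ) - e = 1 by omega, zpow_one]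
    · right; rw [show 6 * u + 4 - 4 * (n : ℤ) - e = -1 by omega, zpow_neg_one]
  rw [deltaRatio, ha_eq, ne_eq, div_eq_one_iff_eq (sub_pos.2 hc).ne', hc_eq]
  generalize q ^ (2 * ((n : ℤ) - u)) = b at hb ⊢
  generalize q ^ ((e : ℤ) - 2) = x at hx ⊢
  generalize q ^ (6 * u + 4 - 4 * (n : ℤ) - e) = y at hy ⊢
  have hq0' : 0 < q := by linarith
  rcases hx with rfl | rfl <;> rcases hy with rfl | rfl <;> intro h <;> field_simp at h <;>
    nlinarith [mul_pos (sub_pos.2 hq) (sub_pos.2 hb)]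

end deltaRatio

lemma two_mul_sum_Ioc_sub_mul (A B : ℤ) {i j : ℤ} (hij : i ≤ j) :
    2 * ∑ u ∈ Ioc i j, (A - B * u) = (j - i) * (2 * A - B * (i + j + 1)) := by
  induction j, hij using Int.leInduction with
  | base => simp
  | succ m hm ih =>
    rw [← insert_Ioc_right_eq_Ioc_add_one hm, sum_insert (by simp), mul_add, ih]
    ring

lemma prod_zpow_eq_zpow_sum {G : Type*} [CommGroupWithZero G] {a : G} (ha : a ≠ 0)
    (s : Finset ℤ) (f : ℤ → ℤ) : ∏ u ∈ s, a ^ f u = a ^ ∑ u ∈ s, f u :=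
  s.cons_induction (by simp) fun _ _ _ ih => by
    simp only [prod_cons, sum_cons, zpow_add₀ ha, ih]

lemma prod_deltaRatio_Ioc_eq_one {n s e : ℕ} (hs : 1 < s) {i j : ℤ} (hi : 0 ≤ i)
    (hij : i ≤ j) (hj : j ≤ n - 1) (h : delta n s e i = delta n s e j) :
    ∏ u ∈ Ioc i j, deltaRatio √(s : ℝ) n e u = 1 := by
  have hq : 1 < √(s : ℝ) := by rw [Real.lt_sqrt zero_le_one]; exact_mod_cast hs
  have hsplit : Icc 0 j = Icc 0 i ∪ Ioc i j := by
    ext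
    simp only [mem_Icc, mem_union, mem_Ioc]
    omega
  have hdisj : Disjoint (Icc 0 i) (Ioc i j) :=
    disjoint_left.2 fun u h1 h2 => by rw [mem_Icc] at h1; rw [mem_Ioc] at h2; omega
  rw [delta_eq_prod_deltaRatio (by omega), delta_eq_prod_deltaRatio (by omega), hsplit,
    prod_union hdisj, eq_comm] at h
  refine (mul_eq_left₀ (prod_ne_zero_iff.2 fun u hu => ?_)).1 h
  rw [mem_Icc] at hu
  exact (deltaRatio_pos hq hu.1 (by omega)).ne'

lemma bounds_of_prod_deltaRatio_eq_one {q : ℝ} (hq : 1 < q) (hq2 : 2 ≤ q ^ 2) {n e : ℕ}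
    {i j : ℤ} (hi : 0 ≤ i) (hij : i < j) (hj : j ≤ n - 1)
    (h : ∏ u ∈ Ioc i j, deltaRatio q n e u = 1) :
    3 * (i + j) + 6 ≤ 4 * (n : ℤ) + e ∧ 4 * (n : ℤ) + e ≤ 3 * (i + j) + 8 := by
  have hq0 : q ≠ 0 := by positivity
  have hne : (Ioc i j).Nonempty := nonempty_Ioc.2 hij
  have hmem : ∀ u ∈ Ioc i j, 1 ≤ u ∧ u ≤ n - 1 := fun u hu => by rw [mem_Ioc] at hu; omega
  have hupper : 1 < q ^ ∑ u ∈ Ioc i j, (4 * (n : ℤ) + e - 2 - 6 * u) := by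
    rw [← prod_zpow_eq_zpow_sum hq0, ← h]
    refine prod_lt_prod_of_nonempty (fun u hu => ?_) (fun u hu => ?_) hne
    · exact deltaRatio_pos hq (by linarith [hmem u hu]) (hmem u hu).2
    · exact deltaRatio_lt hq hq2 (hmem u hu).1 (hmem u hu).2
  have hlower : q ^ ∑ u ∈ Ioc i j, (4 * (n : ℤ) + e - 6 - 6 * u) < 1 := by
    rw [← prod_zpow_eq_zpow_sum hq0, ← h]
    refine prod_lt_prod_of_nonempty (fun u _ => by positivity) (fun u hu => ?_) hne
    exact zpow_lt_deltaRatio hq hq2 (by linarith [hmem u hu]) (hmem u hu).2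
  rw [one_lt_zpow_iff_right₀ hq] at hupper
  rw [zpow_lt_one_iff_right₀ hq] at hlower
  have hsum_upper := two_mul_sum_Ioc_sub_mul (4 * (n : ℤ) + e - 2) 6 hij.le
  have hsum_lower := two_mul_sum_Ioc_sub_mul (4 * (n : ℤ) + e - 6) 6 hij.le
  constructor <;> nlinarith

theorem stmt_7_general (n s e : ℕ) (hs : 2 ≤ s) (he : e ≤ 4)
    (i j : ℤ) (hi : 0 ≤ i) (hij : i < j) (hj : j ≤ (n:ℤ) - 1)
    (h : delta n s e i = delta n s e j) :
    2 * (i:ℝ) + (j:ℝ) + 4 ≤ 2 * (n:ℝ) + (e:ℝ)/2 ∧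
    2 * (n:ℝ) + (e:ℝ)/2 ≤ (i:ℝ) + 2 * (j:ℝ) + 3 := by
  have hq : 1 < √(s : ℝ) := by rw [Real.lt_sqrt zero_le_one]; exact_mod_cast hs
  have hq2 : 2 ≤ √(s : ℝ) ^ 2 := by
    rw [Real.sq_sqrt (Nat.cast_nonneg _)]; exact_mod_cast hs
  have hprod := prod_deltaRatio_Ioc_eq_one (by omega) hi hij.le hj h
  have hbounds := bounds_of_prod_deltaRatio_eq_one hq hq2 hi hij hj hprod
  suffices hZ :
      4 * i + 2 * j + 8 ≤ 4 * (n : ℤ) + e ∧ 4 * (n : ℤ) + e ≤ 2 * i + 4 * j + 6 by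
    obtain ⟨h1, h2⟩ := hZ
    have h1' : (4 * i + 2 * j + 8 : ℝ) ≤ 4 * n + e := by exact_mod_cast h1
    have h2' : (4 * n + e : ℝ) ≤ 2 * i + 4 * j + 6 := by exact_mod_cast h2
    constructor <;> linarith
  obtain hj2 | rfl : i + 2 ≤ j ∨ j = i + 1 := by omega
  · omega
  · rw [← insert_Ioc_right_eq_Ioc_add_one le_rfl, Ioc_self, insert_empty,
      prod_singleton] at hprod
    have hexact : 4 * (n : ℤ) + e = 6 * (i + 1) + 4 := by
      by_contra hne
      exact deltaRatio_ne_one hq hj (by omega) (by omega) hprod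
    omega

theorem stmt_7 (n s e : ℕ) (hn : 3 ≤ n) (hs : 2 ≤ s) (he : e ≤ 4)
    (i j : ℤ) (hi : 0 ≤ i) (hij : i < j) (hj : j ≤ (n:ℤ) - 1)
    (h : delta n s e i = delta n s e j) :
    2 * (i:ℝ) + (j:ℝ) + 4 ≤ 2 * (n:ℝ) + (e:ℝ)/2 ∧
    2 * (n:ℝ) + (e:ℝ)/2 ≤ (i:ℝ) + 2 * (j:ℝ) + 3 :=
  stmt_7_general n s e hs he i j hi hij hj h
end

section
/- Let i be an integer with (n−2)/2 ≤ i < n−2. Then δ(i) = δ(n−2) if and only if n = 5, i = 2 and e = 2 (i.e. t = s). -/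
open Finset

namespace Stmt8

lemma sumA (K : ℕ) : ∑ j ∈ range K, (2*j+3) = K*(K+2) := by
  induction K with
  | zero => simp
  | succ n ih => rw [Finset.sum_range_succ, ih]; ring

lemma sumB2 (K I : ℕ) : 2 * ∑ j ∈ range K, (I+2+j) = K*(2*I+K+3) := by
  induction K with
  | zero => simp
  | succ n ih => rw [Finset.sum_range_succ, Nat.mul_add, ih]; ring

lemma sumC (K : ℕ) : ∑ j ∈ range K, (2*j+5) = K*(K+4) := by
  induction K with
  | zero => simp
  | succ n ih => rw [Finset.sum_range_succ, ih]; ring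

variable {s t : ℝ}

lemma hs0 (hs : 2 ≤ s) : (0:ℝ) < s := by linarith

lemma spow2 (hs : 2 ≤ s) (n : ℕ) (hn : 1 ≤ n) : (2:ℝ) ≤ s^n := by
  calc (2:ℝ) = 2^1 := by norm_num
  _ ≤ 2^n := by apply pow_le_pow_right₀ one_le_two hn
  _ ≤ s^n := by apply pow_le_pow_left₀ (by norm_num) hs

/-- two pow products combine -/
lemma prodA (K : ℕ) :
    (∏ j ∈ range K, (s^(j+1)*t)) * (∏ j ∈ range K, s^(j+2)) = s^(K*(K+2)) * t^K := by
  rw [← Finset.prod_mul_distrib]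
  have : ∀ j ∈ range K, s^(j+1)*t * s^(j+2) = s^(2*j+3) * t := by
    intro j _; rw [show 2*j+3 = (j+1)+(j+2) by ring, pow_add]; ring
  rw [Finset.prod_congr rfl this, Finset.prod_mul_distrib, Finset.prod_pow_eq_pow_sum,
    sumA, Finset.prod_const, Finset.card_range]

lemma prodB (s : ℝ) (K I : ℕ) :
    (∏ j ∈ range K, s^(I+2+j)) = s^(∑ j ∈ range K, (I+2+j)) :=
  Finset.prod_pow_eq_pow_sum _ _ _

/-- upper bound for the `+1` product -/
lemma PU (hs : 2 ≤ s) (ht : 1 ≤ t) :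
    ∀ K, 1 ≤ K → s^K * ∏ j ∈ range K, (s^(j+1)*t+1) ≤
      (3*(s^K-1)) * ∏ j ∈ range K, (s^(j+1)*t) := by
  intro K hK
  induction K with
  | zero => omega
  | succ n ih =>
    rcases Nat.lt_or_ge n 1 with h1 | hn
    · have : n = 0 := by omega
      subst this
      simp only [Finset.prod_range_one, pow_one, zero_add]
      nlinarith [mul_pos (hs0 hs) (show (0:ℝ) < t by linarith),
        mul_nonneg (mul_nonneg (show (0:ℝ) ≤ s-2 by linarith) (hs0 hs).le)
          (show (0:ℝ) ≤ t by linarith)]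
    · have IH := ih hn
      have hz : (2:ℝ) ≤ s^n := spow2 hs n hn
      have hP : (0:ℝ) ≤ ∏ j ∈ range n, (s^(j+1)*t) := by positivity
      have key : (s^n-1)*s*(s^(n+1)*t+1)*3 ≤ (3*(s^(n+1)-1)) * (s^(n+1)*t) := by
        rw [pow_succ]
        nlinarith [mul_nonneg (mul_nonneg (show (0:ℝ) ≤ s-2 by linarith)
            (show (0:ℝ) ≤ s^n by linarith)) (show (0:ℝ) ≤ t by linarith),
          mul_nonneg (show (0:ℝ) ≤ s^n by linarith) (show (0:ℝ) ≤ t-1 by linarith)]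
      calc s^(n+1) * ∏ j ∈ range (n+1), (s^(j+1)*t+1)
          = (s^n * ∏ j ∈ range n, (s^(j+1)*t+1)) * (s*(s^(n+1)*t+1)) := by
            rw [Finset.prod_range_succ]; ring
        _ ≤ ((3*(s^n-1)) * ∏ j ∈ range n, (s^(j+1)*t)) * (s*(s^(n+1)*t+1)) := by
            apply mul_le_mul_of_nonneg_right IH
            have h0 : (0:ℝ) < t := by linarith
            positivity
        _ = (∏ j ∈ range n, (s^(j+1)*t)) * ((s^n-1)*s*(s^(n+1)*t+1)*3) := by ring
        _ ≤ (∏ j ∈ range n, (s^(j+1)*t)) * ((3*(s^(n+1)-1)) * (s^(n+1)*t)) := by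
            exact mul_le_mul_of_nonneg_left key hP
        _ = (3*(s^(n+1)-1)) * ∏ j ∈ range (n+1), (s^(j+1)*t) := by
            rw [Finset.prod_range_succ]; ring

/-- lower bound for products of `s^(r+j) - 1`, strengthened for induction -/
lemma QLaux (hs : 2 ≤ s) (r : ℕ) (hr : 1 ≤ r) :
    ∀ K, (s^(r+K) - 2*s^K + 2) * ∏ j ∈ range K, s^(r+j) ≤
      s^(r+K) * ∏ j ∈ range K, (s^(r+j) - 1) := by
  intro K
  induction K with
  | zero => simp
  | succ n ih =>
    have hw : (2:ℝ) ≤ s^(r+n) := spow2 hs _ (by omega)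
    have hz : (1:ℝ) ≤ s^n := one_le_pow₀ (by linarith)
    have hP : (0:ℝ) ≤ ∏ j ∈ range n, s^(r+j) := by positivity
    have key : (s^(r+(n+1)) - 2*s^(n+1) + 2) * s^(r+n) ≤
        (s^(r+n) - 2*s^n + 2) * (s * (s^(r+n) - 1)) := by
      rw [show r+(n+1) = (r+n)+1 by ring, pow_succ, pow_succ]
      nlinarith [mul_nonneg (show (0:ℝ) ≤ s-2 by linarith) (show (0:ℝ) ≤ s^(r+n) by linarith),
        mul_nonneg (show (0:ℝ) ≤ s-2 by linarith) (show (0:ℝ) ≤ s^n - 1 by linarith),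
        mul_nonneg (mul_nonneg (show (0:ℝ) ≤ s-2 by linarith) (show (0:ℝ) ≤ s^n - 1 by linarith)) (show (0:ℝ) ≤ s^(r+n) by linarith)]
    have hmono : (0:ℝ) ≤ s * (s^(r+n) - 1) := by nlinarith
    calc (s^(r+(n+1)) - 2*s^(n+1) + 2) * ∏ j ∈ range (n+1), s^(r+j)
        = ((s^(r+(n+1)) - 2*s^(n+1) + 2) * s^(r+n)) * ∏ j ∈ range n, s^(r+j) := by
          rw [Finset.prod_range_succ]; ring
      _ ≤ ((s^(r+n) - 2*s^n + 2) * (s * (s^(r+n) - 1))) * ∏ j ∈ range n, s^(r+j) := by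
          exact mul_le_mul_of_nonneg_right key hP
      _ = ((s^(r+n) - 2*s^n + 2) * ∏ j ∈ range n, s^(r+j)) * (s * (s^(r+n) - 1)) := by ring
      _ ≤ (s^(r+n) * ∏ j ∈ range n, (s^(r+j) - 1)) * (s * (s^(r+n) - 1)) := by
          exact mul_le_mul_of_nonneg_right ih hmono
      _ = s^(r+(n+1)) * ∏ j ∈ range (n+1), (s^(r+j) - 1) := by
          rw [Finset.prod_range_succ, show r+(n+1) = (r+n)+1 by ring, pow_succ]; ring

/-- corollary: `(s^r - 2) * ∏ s^(r+j) ≤ s^r * ∏ (s^(r+j)-1)` -/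
lemma QL (hs : 2 ≤ s) (r : ℕ) (hr : 1 ≤ r) (K : ℕ) :
    (s^r - 2) * ∏ j ∈ range K, s^(r+j) ≤ s^r * ∏ j ∈ range K, (s^(r+j) - 1) := by
  have h := QLaux hs r hr K
  have hsK : (0:ℝ) < s^K := pow_pos (hs0 hs) K
  have hP : (0:ℝ) ≤ ∏ j ∈ range K, s^(r+j) := by positivity
  have h1 : (s^r - 2) * s^K * ∏ j ∈ range K, s^(r+j) ≤
      (s^(r+K) - 2*s^K + 2) * ∏ j ∈ range K, s^(r+j) := by
    apply mul_le_mul_of_nonneg_right _ hP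
    rw [pow_add]; nlinarith
  have h2 : ((s^r - 2) * ∏ j ∈ range K, s^(r+j)) * s^K ≤
      (s^r * ∏ j ∈ range K, (s^(r+j)-1)) * s^K := by
    calc ((s^r - 2) * ∏ j ∈ range K, s^(r+j)) * s^K
        = (s^r - 2) * s^K * ∏ j ∈ range K, s^(r+j) := by ring
    _ ≤ (s^(r+K) - 2*s^K + 2) * ∏ j ∈ range K, s^(r+j) := h1
    _ ≤ s^(r+K) * ∏ j ∈ range K, (s^(r+j) - 1) := h
    _ = (s^r * ∏ j ∈ range K, (s^(r+j)-1)) * s^K := by rw [pow_add]; ring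
  exact le_of_mul_le_mul_right h2 hsK


noncomputable def PP (s t : ℝ) (K : ℕ) : ℝ := ∏ j ∈ range K, ((s^(j+1)*t+1)*(s^(j+2)-1))
noncomputable def QQ (s : ℝ) (K I : ℕ) : ℝ := ∏ j ∈ range K, (s^(I+2+j)-1)

variable {e K I A B : ℕ}

lemma QQ_pos (hs : 2 ≤ s) : 0 < QQ s K I := by
  apply Finset.prod_pos
  intro j _
  have := spow2 hs (I+2+j) (by omega)
  linarith

lemma PP_pos (hs : 2 ≤ s) (ht : 1 ≤ t) : 0 < PP s t K := by
  apply Finset.prod_pos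
  intro j _
  have h1 := spow2 hs (j+2) (by omega)
  have h2 : (0:ℝ) < s^(j+1)*t := by positivity
  nlinarith

/-- Q < s^SB -/
lemma QQ_lt (hs : 2 ≤ s) (hK : 1 ≤ K) : QQ s K I < s^(∑ j ∈ range K, (I+2+j)) := by
  rw [← prodB]
  apply Finset.prod_lt_prod_of_nonempty
  · intro j _
    have := spow2 hs (I+2+j) (by omega); linarith
  · intro j _; nlinarith [pow_pos (hs0 hs) (I+2+j)]
  · exact Finset.nonempty_range_iff.mpr (by omega)

/-- 3*s^SB ≤ 4*Q, for I ≥ 1 -/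
lemma QQ_ge (hs : 2 ≤ s) (hI : 1 ≤ I) : 3*s^(∑ j ∈ range K, (I+2+j)) ≤ 4 * QQ s K I := by
  have hql := QL hs (I+2) (by omega) K
  have h8 : (8:ℝ) ≤ s^(I+2) := by
    calc (8:ℝ) = 2^3 := by norm_num
    _ ≤ 2^(I+2) := by apply pow_le_pow_right₀ one_le_two (by omega)
    _ ≤ s^(I+2) := by apply pow_le_pow_left₀ (by norm_num) hs
  have hPi : (0:ℝ) ≤ ∏ j ∈ range K, s^(I+2+j) := by positivity
  have hr : (0:ℝ) < s^(I+2) := pow_pos (hs0 hs) _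
  -- 3 * s^(I+2) ≤ 4*(s^(I+2)-2)
  have h1 : 3*s^(I+2) * (∏ j ∈ range K, s^(I+2+j)) ≤ 4*((s^(I+2)-2) * ∏ j ∈ range K, s^(I+2+j)) := by
    nlinarith [hPi, h8, mul_le_mul_of_nonneg_right (show 3*s^(I+2) ≤ 4*(s^(I+2)-2) by linarith) hPi]
  have h2 : 3*s^(I+2) * (∏ j ∈ range K, s^(I+2+j)) ≤ 4*(s^(I+2) * QQ s K I) := by
    calc 3*s^(I+2) * (∏ j ∈ range K, s^(I+2+j)) ≤ 4*((s^(I+2)-2) * ∏ j ∈ range K, s^(I+2+j)) := h1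
    _ ≤ 4*(s^(I+2) * QQ s K I) := by unfold QQ; nlinarith [hql]
  rw [← prodB]
  nlinarith [h2, hr, mul_pos hr (QQ_pos (K := K) (I := I) hs)]

/-- s^K * P ≤ 3*(s^K-1) * s^A * t^K for K ≥ 1 -/
lemma PP_le (hs : 2 ≤ s) (ht : 1 ≤ t) (hK : 1 ≤ K) :
    s^K * PP s t K ≤ 3*(s^K - 1) * (s^(K*(K+2)) * t^K) := by
  have hpu := PU hs ht K hK
  have h2 : ∏ j ∈ range K, ((s^(j+1)*t+1)*(s^(j+2)-1)) ≤
      (∏ j ∈ range K, (s^(j+1)*t+1)) * (∏ j ∈ range K, s^(j+2)) := by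
    rw [Finset.prod_mul_distrib]
    apply mul_le_mul_of_nonneg_left _ (by positivity)
    apply Finset.prod_le_prod
    · intro j _; nlinarith [spow2 hs (j+2) (by omega)]
    · intro j _; nlinarith [pow_pos (hs0 hs) (j+2)]
  have hsK : (0:ℝ) < s^K := pow_pos (hs0 hs) K
  have hprod2 : (0:ℝ) ≤ ∏ j ∈ range K, s^(j+2) := by positivity
  calc s^K * PP s t K ≤ s^K * ((∏ j ∈ range K, (s^(j+1)*t+1)) * (∏ j ∈ range K, s^(j+2))) := by
          unfold PP; nlinarith [h2, hsK]
    _ = (s^K * ∏ j ∈ range K, (s^(j+1)*t+1)) * (∏ j ∈ range K, s^(j+2)) := by ring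
    _ ≤ ((3*(s^K-1)) * ∏ j ∈ range K, (s^(j+1)*t)) * (∏ j ∈ range K, s^(j+2)) := by
          exact mul_le_mul_of_nonneg_right hpu hprod2
    _ = 3*(s^K-1) * ((∏ j ∈ range K, (s^(j+1)*t)) * (∏ j ∈ range K, s^(j+2))) := by ring
    _ = 3*(s^K-1) * (s^(K*(K+2)) * t^K) := by rw [prodA]

/-- P < 3 * s^A * t^K for K ≥ 1 -/
lemma PP_lt (hs : 2 ≤ s) (ht : 1 ≤ t) (hK : 1 ≤ K) :
    PP s t K < 3 * (s^(K*(K+2)) * t^K) := by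
  have key := PP_le (K := K) hs ht hK
  have hsK : (0:ℝ) < s^K := pow_pos (hs0 hs) K
  have hAt : (0:ℝ) < s^(K*(K+2)) * t^K := by positivity
  have : s^K * PP s t K < s^K * (3 * (s^(K*(K+2)) * t^K)) := by nlinarith [key, hAt]
  exact lt_of_mul_lt_mul_left this hsK.le

/-- 2*P ≥ s^A*t^K -/
lemma PP_ge (hs : 2 ≤ s) (ht : 1 ≤ t) : s^(K*(K+2)) * t^K ≤ 2 * PP s t K := by
  have hql := QL hs 2 (by omega) K
  have hPt : (0:ℝ) ≤ ∏ j ∈ range K, (s^(j+1)*t) := by positivity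
  have hPm : (0:ℝ) ≤ ∏ j ∈ range K, (s^(2+j)-1) := by
    apply Finset.prod_nonneg; intro j _
    nlinarith [spow2 hs (2+j) (by omega)]
  have h1 : (∏ j ∈ range K, (s^(j+1)*t)) * (∏ j ∈ range K, (s^(2+j)-1)) ≤ PP s t K := by
    unfold PP
    have e2 : ∀ j ∈ range K, (s^(j+1)*t)*(s^(2+j)-1) ≤ (s^(j+1)*t+1)*(s^(j+2)-1) := by
      intro j _
      rw [show 2+j = j+2 by ring]
      nlinarith [spow2 hs (j+2) (by omega), pow_pos (hs0 hs) (j+1), (show (0:ℝ) < t by linarith)]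
    calc (∏ j ∈ range K, (s^(j+1)*t)) * (∏ j ∈ range K, (s^(2+j)-1))
        = ∏ j ∈ range K, ((s^(j+1)*t)*(s^(2+j)-1)) := (Finset.prod_mul_distrib).symm
      _ ≤ ∏ j ∈ range K, ((s^(j+1)*t+1)*(s^(j+2)-1)) := by
          apply Finset.prod_le_prod _ e2
          intro j _
          apply mul_nonneg (by positivity)
          nlinarith [spow2 hs (2+j) (by omega), (show (2:ℝ)+(j:ℝ) = ((j:ℕ):ℝ)+2 by ring)]
  have e1 : (∏ j ∈ range K, (s^(j+1)*t)) * (∏ j ∈ range K, s^(2+j)) = s^(K*(K+2)) * t^K := by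
    rw [show (∏ j ∈ range K, s^(2+j)) = ∏ j ∈ range K, s^(j+2) from
      Finset.prod_congr rfl (fun j _ => by rw [Nat.add_comm])]
    exact prodA K
  have hs2 : (0:ℝ) < s^2 := pow_pos (hs0 hs) 2
  have key : s^2 * (s^(K*(K+2)) * t^K) ≤ s^2 * (2 * PP s t K) := by
    calc s^2 * (s^(K*(K+2)) * t^K)
        = (∏ j ∈ range K, (s^(j+1)*t)) * (s^2 * ∏ j ∈ range K, s^(2+j)) := by rw [← e1]; ring
      _ ≤ (∏ j ∈ range K, (s^(j+1)*t)) * (2*((s^2-2) * ∏ j ∈ range K, s^(2+j))) := by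
          apply mul_le_mul_of_nonneg_left _ hPt
          have hPs : (0:ℝ) ≤ ∏ j ∈ range K, s^(2+j) := by positivity
          nlinarith [mul_le_mul_of_nonneg_right (show s^2 ≤ 2*(s^2-2) by nlinarith [spow2 hs 2 (by omega), sq_nonneg (s-2)]) hPs]
      _ ≤ (∏ j ∈ range K, (s^(j+1)*t)) * (2*(s^2 * ∏ j ∈ range K, (s^(2+j)-1))) := by
          apply mul_le_mul_of_nonneg_left _ hPt
          linarith [hql]
      _ = s^2 * (2*((∏ j ∈ range K, (s^(j+1)*t)) * (∏ j ∈ range K, (s^(2+j)-1)))) := by ring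
      _ ≤ s^2 * (2 * PP s t K) := by nlinarith [h1, hs2]
  nlinarith [key, hs2]


lemma pow16 (hs : 2 ≤ s) : (16:ℝ) ≤ s^4 := by
  calc (16:ℝ) = 2^4 := by norm_num
  _ ≤ s^4 := by apply pow_le_pow_left₀ (by norm_num) hs

/-- from integer exponent inequality to real: c * s^A * t^K ≤ s^B -/
lemma cond_up (hs : 2 ≤ s) (ht0 : 0 ≤ t) (ht2 : t^2 = s^e) {c : ℝ} (hc : 0 ≤ c)
    {m A B K : ℕ} (hcs : c^2 ≤ s^m) (h : 2*A + e*K + m ≤ 2*B) :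
    c * (s^A * t^K) ≤ s^B := by
  have h0 : (0:ℝ) < s := hs0 hs
  apply le_of_pow_le_pow_left₀ (two_ne_zero) (pow_nonneg h0.le B)
  have e1 : (c * (s^A * t^K))^2 = c^2 * (s^(2*A) * (s^e)^K) := by
    rw [← ht2]; rw [pow_mul]; ring
  have e2 : (s^B)^2 = s^(2*B) := by rw [← pow_mul]; ring_nf
  rw [e1, e2, ← pow_mul, ← pow_add]
  calc c^2 * s^(2*A + e*K) ≤ s^m * s^(2*A+e*K) := by
        apply mul_le_mul_of_nonneg_right hcs (by positivity)
    _ = s^(2*A + e*K + m) := by rw [← pow_add]; ring_nf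
    _ ≤ s^(2*B) := by apply pow_le_pow_right₀ (by linarith) h
  
/-- reverse direction : c * s^B ≤ s^A * t^K -/
lemma cond_dn (hs : 2 ≤ s) (ht0 : 0 ≤ t) (ht2 : t^2 = s^e) {c : ℝ} (hc : 0 ≤ c)
    {m A B K : ℕ} (hcs : c^2 ≤ s^m) (h : 2*B + m ≤ 2*A + e*K) :
    c * s^B ≤ s^A * t^K := by
  have h0 : (0:ℝ) < s := hs0 hs
  apply le_of_pow_le_pow_left₀ (two_ne_zero) (by positivity)
  have e1 : (s^A * t^K)^2 = s^(2*A) * (s^e)^K := by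
    rw [← ht2]; rw [pow_mul]; ring
  have e2 : (c * s^B)^2 = c^2 * s^(2*B) := by ring
  rw [e1, e2, ← pow_mul, ← pow_add]
  calc c^2 * s^(2*B) ≤ s^m * s^(2*B) := by
        apply mul_le_mul_of_nonneg_right hcs (by positivity)
    _ = s^(2*B + m) := by rw [← pow_add]; ring_nf
    _ ≤ s^(2*A + e*K) := by apply pow_le_pow_right₀ (by linarith) h

lemma cond_eq (hs : 2 ≤ s) (ht0 : 0 ≤ t) (ht2 : t^2 = s^e)
    {A B K : ℕ} (h : 2*B = 2*A + e*K) :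
    s^A * t^K = s^B := by
  apply le_antisymm
  · have := cond_up hs ht0 ht2 (c := 1) (by norm_num) (m := 0) (A := A) (B := B) (K := K)
      (by norm_num) (by omega)
    linarith
  · have := cond_dn hs ht0 ht2 (c := 1) (by norm_num) (m := 0) (A := A) (B := B) (K := K)
      (by norm_num) (by omega)
    linarith

/-- Lemma I : P < Q when 2A + eK + 4 ≤ 2B -/
lemma lemI (hs : 2 ≤ s) (ht : 1 ≤ t) (ht2 : t^2 = s^e) (hK : 1 ≤ K) (hI : 1 ≤ I)
    (h : 2*(K*(K+2)) + e*K + 4 ≤ 2*(∑ j ∈ range K, (I+2+j))) :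
    PP s t K < QQ s K I := by
  have h1 := PP_lt hs ht hK
  have h2 := QQ_ge (K := K) hs hI
  have h3 : 4 * (s^(K*(K+2)) * t^K) ≤ s^(∑ j ∈ range K, (I+2+j)) :=
    cond_up hs (by linarith) ht2 (c := 4) (by norm_num) (m := 4)
      (by nlinarith [pow16 hs] : (4:ℝ)^2 ≤ s^4) h
  nlinarith [h1, h2, h3]

/-- Lemma II : Q < P when 2B + 2 ≤ 2A + eK -/
lemma lemII (hs : 2 ≤ s) (ht : 1 ≤ t) (ht2 : t^2 = s^e) (hK : 1 ≤ K)
    (h : 2*(∑ j ∈ range K, (I+2+j)) + 2 ≤ 2*(K*(K+2)) + e*K) :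
    QQ s K I < PP s t K := by
  have h1 := QQ_lt (I := I) hs hK
  have h2 := PP_ge (K := K) hs ht
  have h3 : 2 * s^(∑ j ∈ range K, (I+2+j)) ≤ s^(K*(K+2)) * t^K :=
    cond_dn hs (by linarith) ht2 (c := 2) (by norm_num) (m := 2)
      (by nlinarith : (2:ℝ)^2 ≤ s^2) h
  nlinarith [h1, h2, h3]

/-- Lemma IV : Q < P when s*t+1 ≤ s^2 and 2B ≤ 2A + eK -/
lemma lemIV (hs : 2 ≤ s) (ht : 1 ≤ t) (ht2 : t^2 = s^e) (hK : 1 ≤ K)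
    (hst : s*t + 1 ≤ s^2)
    (h : 2*(∑ j ∈ range K, (I+2+j)) ≤ 2*(K*(K+2)) + e*K) :
    QQ s K I < PP s t K := by
  have h1 := QQ_lt (I := I) hs hK
  have h3 : (1:ℝ) * s^(∑ j ∈ range K, (I+2+j)) ≤ s^(K*(K+2)) * t^K :=
    cond_dn hs (by linarith) ht2 (by norm_num) (m := 0) (by norm_num) (by omega)
  -- P ≥ s^A t^K : per-factor ≥ s^(2j+3) t
  have h4 : s^(K*(K+2)) * t^K ≤ PP s t K := by
    have e2 : ∀ j ∈ range K, (s^(2*j+3)*t) ≤ (s^(j+1)*t+1)*(s^(j+2)-1) := by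
      intro j _
      have hj : (1:ℝ) ≤ s^j := one_le_pow₀ (by linarith)
      have key : s^j * (s^2 - s*t) ≥ 1 := by
        have h5 : (1:ℝ) ≤ s^2 - s*t := by linarith
        nlinarith [hj, h5]
      have e3 : s^(2*j+3) = s^(j+1) * s^(j+2) := by rw [← pow_add]; ring_nf
      have e4 : s^(j+2) = s^j * s^2 := by rw [← pow_add]
      have e5 : s^(j+1) = s^j * s := pow_succ s j
      rw [e3, e4, e5]
      nlinarith [key, pow_pos (hs0 hs) j, (show (0:ℝ) < t by linarith), mul_pos (pow_pos (hs0 hs) j) (mul_pos (hs0 hs) (show (0:ℝ) < t by linarith))]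
    calc s^(K*(K+2)) * t^K = ∏ j ∈ range K, (s^(2*j+3)*t) := by
          rw [Finset.prod_mul_distrib, Finset.prod_pow_eq_pow_sum, sumA, Finset.prod_const, Finset.card_range]
      _ ≤ ∏ j ∈ range K, ((s^(j+1)*t+1)*(s^(j+2)-1)) := by
          apply Finset.prod_le_prod _ e2
          intro j _; positivity
      _ = PP s t K := rfl
  nlinarith [h1, h3, h4]


/-- Lemma III : P < Q in the boundary case with t ≥ √2·s -/
lemma lemIII (hs : 2 ≤ s) (ht : 1 ≤ t) (hK : 1 ≤ K) (hI : 3 ≤ I)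
    (ht2 : 2*s^2 ≤ t^2)
    (hAB : s^(K*(K+2)) * t^K = s^(∑ j ∈ range K, (I+2+j))) :
    PP s t K < QQ s K I := by
  obtain ⟨K', rfl⟩ : ∃ K', K = K'+1 := ⟨K-1, by omega⟩
  have h0 : (0:ℝ) < s := hs0 hs
  have ht0 : (0:ℝ) < t := by linarith
  have hts : s ≤ t := by nlinarith [sq_nonneg (s-t), sq_nonneg s]
  have h43 : 4*s ≤ 3*t := by nlinarith [sq_nonneg (3*t-4*s), sq_nonneg s]
  set a := K'*(K'+4) with ha
  set SB := ∑ j ∈ range (K'+1), (I+2+j) with hSB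
  set X := s^SB with hX
  have hXpos : (0:ℝ) < X := pow_pos h0 _
  have hAB' : s^(a+3) * t^(K'+1) = X := by
    rw [← hAB]; congr 2; ring
  -- tail bound
  have htail : (∏ j ∈ range K', ((s^(j+1+1)*t+1)*(s^(j+1+2)-1))) ≤ ∏ j ∈ range K', (s^(2*j+5)*t) := by
    apply Finset.prod_le_prod
    · intro j _
      have := spow2 hs (j+1+2) (by omega)
      have : (0:ℝ) < s^(j+1+1)*t := by positivity
      nlinarith [spow2 hs (j+1+2) (by omega)]
    · intro j _
      have e1 : s^(j+1+2) = s^(j+1+1) * s := pow_succ s (j+1+1)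
      have e2 : s^(2*j+5) = s^(j+1+1) * s^(j+1+2) := by rw [← pow_add]; congr 1; ring
      have h3 : s^(j+1+2) ≤ s^(j+1+1)*t := by
        rw [e1]; exact mul_le_mul_of_nonneg_left hts (by positivity)
      nlinarith [pow_pos h0 (j+1+1), pow_pos h0 (j+1+2), h3]
  have hptail : (∏ j ∈ range K', (s^(2*j+5)*t)) = s^a * t^K' := by
    rw [Finset.prod_mul_distrib, Finset.prod_pow_eq_pow_sum, sumC, Finset.prod_const, Finset.card_range]
  have htailpos : (0:ℝ) < s^a * t^K' := by positivity
  -- split PP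
  have hsplit : PP s t (K'+1) = (∏ j ∈ range K', ((s^(j+1+1)*t+1)*(s^(j+1+2)-1))) * ((s^(0+1)*t+1)*(s^(0+2)-1)) := by
    unfold PP
    exact Finset.prod_range_succ' _ _
  have hf0pos : (0:ℝ) ≤ (s^(0+1)*t+1)*(s^(0+2)-1) := by
    have := spow2 hs (0+2) (by omega)
    have : (0:ℝ) < s^(0+1)*t := by positivity
    nlinarith [spow2 hs (0+2) (by omega)]
  have hstep1 : PP s t (K'+1) ≤ (s^a * t^K') * ((s*t+1)*(s^2-1)) := by
    rw [hsplit]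
    calc (∏ j ∈ range K', ((s^(j+1+1)*t+1)*(s^(j+1+2)-1))) * ((s^(0+1)*t+1)*(s^(0+2)-1))
        ≤ (∏ j ∈ range K', (s^(2*j+5)*t)) * ((s^(0+1)*t+1)*(s^(0+2)-1)) :=
          mul_le_mul_of_nonneg_right htail hf0pos
      _ = (s^a * t^K') * ((s*t+1)*(s^2-1)) := by rw [hptail]; norm_num
  -- strict front-factor bound : 4*((s*t+1)*(s^2-1)) < 4*s^3*t - s*t
  have hf0 : 4*((s*t+1)*(s^2-1)) < 4*s^3*t - s*t := by nlinarith [h43, hs, ht0]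
  have hstep2 : 4 * PP s t (K'+1) < (s^a * t^K') * (4*s^3*t - s*t) := by
    calc 4 * PP s t (K'+1) = 4 * (PP s t (K'+1)) := rfl
    _ ≤ 4 * ((s^a * t^K') * ((s*t+1)*(s^2-1))) := by
        apply mul_le_mul_of_nonneg_left hstep1 (by norm_num)
    _ = (s^a * t^K') * (4*((s*t+1)*(s^2-1))) := by ring
    _ < (s^a * t^K') * (4*s^3*t - s*t) := mul_lt_mul_of_pos_left hf0 htailpos
  have hstep3 : s^2 * (4 * PP s t (K'+1)) < (4*s^2 - 1) * X := by
    have e3 : s^2 * ((s^a * t^K') * (4*s^3*t - s*t)) = (4*s^2-1) * (s^(a+3) * t^(K'+1)) := by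
      rw [pow_add, pow_succ]; ring
    calc s^2 * (4 * PP s t (K'+1)) < s^2 * ((s^a * t^K') * (4*s^3*t - s*t)) :=
          mul_lt_mul_of_pos_left hstep2 (pow_pos h0 2)
      _ = (4*s^2-1) * (s^(a+3) * t^(K'+1)) := e3
      _ = (4*s^2-1) * X := by rw [hAB']
  -- Q side
  have hQL : (s^(I+2) - 2) * X ≤ s^(I+2) * QQ s (K'+1) I := by
    have := QL hs (I+2) (by omega) (K'+1)
    rwa [prodB] at this
  have h8 : 8*s^2 ≤ s^(I+2) := by
    calc 8*s^2 = s^2 * 8 := by ring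
    _ ≤ s^2 * s^3 := by
        apply mul_le_mul_of_nonneg_left _ (by positivity)
        calc (8:ℝ) = 2^3 := by norm_num
        _ ≤ s^3 := by apply pow_le_pow_left₀ (by norm_num) hs
    _ = s^5 := by rw [← pow_add]
    _ ≤ s^(I+2) := by apply pow_le_pow_right₀ (by linarith) (by omega)
  have hr : (0:ℝ) < s^(I+2) := pow_pos h0 _
  have final : (4*s^2*s^(I+2)) * PP s t (K'+1) < (4*s^2*s^(I+2)) * QQ s (K'+1) I := by
    calc (4*s^2*s^(I+2)) * PP s t (K'+1) = s^(I+2) * (s^2 * (4 * PP s t (K'+1))) := by ring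
    _ < s^(I+2) * ((4*s^2-1) * X) := by
        exact mul_lt_mul_of_pos_left hstep3 hr
    _ = ((4*s^2-1) * s^(I+2)) * X := by ring
    _ ≤ (4*(s^(I+2)-2)*s^2) * X := by
        apply mul_le_mul_of_nonneg_right _ hXpos.le
        nlinarith [h8, hr, pow_pos h0 2]
    _ = (4*s^2) * ((s^(I+2)-2) * X) := by ring
    _ ≤ (4*s^2) * (s^(I+2) * QQ s (K'+1) I) := by
        apply mul_le_mul_of_nonneg_left hQL (by positivity)
    _ = (4*s^2*s^(I+2)) * QQ s (K'+1) I := by ring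
  exact lt_of_mul_lt_mul_left final (by positivity)


lemma Wbase (hs : 2 ≤ s) : 9*s*(s^3-1)^2 < (s^5-2)^2 := by
  have hu : (0:ℝ) ≤ s - 2 := by linarith
  have key : (s^5-2)^2 - 9*s*(s^3-1)^2 =
      18 + 1335*(s-2) + 5584*(s-2)^2 + 10304*(s-2)^3 + 10898*(s-2)^4 + 7304*(s-2)^5
      + 3234*(s-2)^6 + 951*(s-2)^7 + 180*(s-2)^8 + 20*(s-2)^9 + (s-2)^10 := by ring
  nlinarith [pow_nonneg hu 2, pow_nonneg hu 3, pow_nonneg hu 4, pow_nonneg hu 5,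
    pow_nonneg hu 6, pow_nonneg hu 7, pow_nonneg hu 8, pow_nonneg hu 9, pow_nonneg hu 10, key]

lemma Wlem (hs : 2 ≤ s) : ∀ K, 3 ≤ K → 9*(s^K-1)^2*s^10 < (s^5-2)^2*s^(3*K) := by
  have h0 : (0:ℝ) < s := hs0 hs
  intro K hK
  induction K, hK using Nat.le_induction with
  | base =>
    have h9 : (0:ℝ) < s^9 := pow_pos h0 9
    have e1 : 9*(s^3-1)^2*s^10 = (9*s*(s^3-1)^2) * s^9 := by ring
    have e2 : (s^5-2)^2*s^(3*3) = (s^5-2)^2 * s^9 := by norm_num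
    rw [e1, e2]
    exact mul_lt_mul_of_pos_right (Wbase hs) h9
  | succ n hn ih =>
    have hz : s^3 ≤ s^n := pow_le_pow_right₀ (by linarith) hn
    have h8 : (8:ℝ) ≤ s^3 := by
      calc (8:ℝ) = 2^3 := by norm_num
      _ ≤ s^3 := by apply pow_le_pow_left₀ (by norm_num) hs
    have h2s : 2*s ≤ s^3 := by nlinarith [sq_nonneg s, h0]
    have key : (s^(n+1)-1)^2 ≤ s^3*(s^n-1)^2 := by
      rw [pow_succ s n]
      nlinarith [hz, h8, pow_pos h0 n, pow_pos h0 3, mul_pos h0 (pow_pos h0 n),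
        mul_nonneg (mul_nonneg (sq_nonneg s) (pow_pos h0 n).le) (show (0:ℝ) ≤ s^n - 2*s by nlinarith [hz, h2s]),
        mul_nonneg (mul_nonneg (sq_nonneg s) (sq_nonneg (s^n))) (show (0:ℝ) ≤ s - 2 by linarith)]
    have hs10 : (0:ℝ) < s^10 := pow_pos h0 10
    calc 9*(s^(n+1)-1)^2*s^10 ≤ 9*(s^3*(s^n-1)^2)*s^10 := by nlinarith [key, hs10]
    _ = s^3 * (9*(s^n-1)^2*s^10) := by ring
    _ < s^3 * ((s^5-2)^2*s^(3*n)) := mul_lt_mul_of_pos_left ih (pow_pos h0 3)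
    _ = (s^5-2)^2*s^(3*(n+1)) := by rw [show 3*(n+1) = 3*n+3 by ring, pow_add]; ring

/-- condition helper for lemma V -/
lemma cond_sq (hs : 2 ≤ s) (ht0 : 0 ≤ t) (ht2 : t^2 = s^e)
    {A B K : ℕ} (h : 2*A + e*K + K ≤ 2*B) :
    (s^A * t^K)^2 * s^K ≤ (s^B)^2 := by
  have e1 : (s^A * t^K)^2 * s^K = s^(2*A) * (s^e)^K * s^K := by
    rw [← ht2]; rw [pow_mul]; ring
  have e2 : (s^B)^2 = s^(2*B) := by rw [← pow_mul]; ring_nf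
  rw [e1, e2, ← pow_mul, ← pow_add, ← pow_add]
  apply pow_le_pow_right₀ (by linarith) (by omega)

/-- Lemma V : P < Q when K ≥ 3, I ≥ 3 and 2A + eK + K ≤ 2B -/
lemma lemV (hs : 2 ≤ s) (ht : 1 ≤ t) (ht2 : t^2 = s^e) (hK : 3 ≤ K) (hI : 3 ≤ I)
    (h : 2*(K*(K+2)) + e*K + K ≤ 2*(∑ j ∈ range K, (I+2+j))) :
    PP s t K < QQ s K I := by
  have h0 : (0:ℝ) < s := hs0 hs
  set SB := ∑ j ∈ range K, (I+2+j) with hSB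
  set X := s^SB with hX
  set Y := s^(K*(K+2)) * t^K with hY
  have hXpos : (0:ℝ) < X := pow_pos h0 _
  have hYpos : (0:ℝ) < Y := by positivity
  have hcond : Y^2 * s^K ≤ X^2 := cond_sq hs (by linarith) ht2 h
  have hPle := PP_le (K := K) hs ht (by omega)
  have hQL : (s^(I+2) - 2) * X ≤ s^(I+2) * QQ s K I := by
    have := QL hs (I+2) (by omega) K
    rwa [prodB] at this
  have hPP := PP_pos (K := K) hs ht
  have hQQ := QQ_pos (K := K) (I := I) hs
  have hr2 : (2:ℝ) ≤ s^(I+2) := spow2 hs _ (by omega)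
  have hK2 : (2:ℝ) ≤ s^K := spow2 hs _ (by omega)
  have hW := Wlem hs K hK
  -- squares
  have sq1 : (s^K * PP s t K)^2 ≤ (3*(s^K-1)*Y)^2 := by
    apply pow_le_pow_left₀ (by positivity) hPle
  have sq2 : ((s^(I+2) - 2) * X)^2 ≤ (s^(I+2) * QQ s K I)^2 := by
    apply pow_le_pow_left₀ (by nlinarith [hXpos]) hQL
  have hmono : (s^5-2)*s^(I+2) ≤ (s^(I+2)-2)*s^5 := by
    have h5 : s^5 ≤ s^(I+2) := pow_le_pow_right₀ (by linarith) (by omega)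
    nlinarith [h5, pow_pos h0 5]
  have h52 : (2:ℝ) ≤ s^5 := spow2 hs _ (by omega)
  have sq3 : ((s^5-2)*s^(I+2))^2 ≤ ((s^(I+2)-2)*s^5)^2 := by
    apply pow_le_pow_left₀ _ hmono
    exact mul_nonneg (by linarith) (pow_pos h0 _).le
  have e3K : s^(3*K) = s^K * (s^K)^2 := by
    rw [show 3*K = K+K+K by ring, pow_add, pow_add]; ring
  have key : ((s^K)^2 * s^10 * (s^(I+2))^2) * PP s t K ^2 <
      ((s^K)^2 * s^10 * (s^(I+2))^2) * QQ s K I ^2 := by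
    calc ((s^K)^2 * s^10 * (s^(I+2))^2) * PP s t K ^2
        = ((s^K * PP s t K)^2) * (s^10 * (s^(I+2))^2) := by ring
      _ ≤ ((3*(s^K-1)*Y)^2) * (s^10 * (s^(I+2))^2) := by
          apply mul_le_mul_of_nonneg_right sq1 (by positivity)
      _ = (9*(s^K-1)^2*s^10) * (Y^2 * (s^(I+2))^2) := by ring
      _ < ((s^5-2)^2*s^(3*K)) * (Y^2 * (s^(I+2))^2) := by
          apply mul_lt_mul_of_pos_right hW (by positivity)
      _ = ((s^5-2)*s^(I+2))^2 * ((Y^2*s^K) * (s^K)^2) := by rw [e3K]; ring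
      _ ≤ ((s^5-2)*s^(I+2))^2 * (X^2 * (s^K)^2) := by
          apply mul_le_mul_of_nonneg_left _ (by positivity)
          apply mul_le_mul_of_nonneg_right hcond (by positivity)
      _ ≤ ((s^(I+2)-2)*s^5)^2 * (X^2 * (s^K)^2) := by
          apply mul_le_mul_of_nonneg_right sq3 (by positivity)
      _ = ((s^(I+2)-2)*X)^2 * ((s^5)^2 * (s^K)^2) := by ring
      _ ≤ ((s^(I+2)) * QQ s K I)^2 * ((s^5)^2 * (s^K)^2) := by
          apply mul_le_mul_of_nonneg_right sq2 (by positivity)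
      _ = ((s^K)^2 * s^10 * (s^(I+2))^2) * QQ s K I ^2 := by ring
  have hsq : PP s t K ^2 < QQ s K I ^2 := lt_of_mul_lt_mul_left key (by positivity)
  exact lt_of_pow_lt_pow_left₀ 2 hQQ.le hsq


lemma prod_Ioc_range (i : ℤ) (K : ℕ) (f : ℤ → ℝ) :
    ∏ u ∈ Finset.Ioc i (i + K), f u = ∏ a ∈ range K, f (i + 1 + a) := by
  induction K with
  | zero => simp
  | succ n ih =>
    have h1 : Finset.Ioc i (i + (n+1:ℕ)) = insert (i + (n:ℕ) + 1) (Finset.Ioc i (i + n)) := by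
      ext x
      simp only [Finset.mem_Ioc, Finset.mem_insert]
      omega
    rw [h1, Finset.prod_insert (by simp only [Finset.mem_Ioc]; omega), ih,
      Finset.prod_range_succ]
    rw [mul_comm]
    congr 2
    push_cast
    ring

/-- splitting a product over Icc -/
lemma prod_split (I : ℕ) (K : ℕ) (f : ℤ → ℝ) :
    ∏ u ∈ Finset.Icc (0:ℤ) ((I:ℤ) + K), f u =
      (∏ u ∈ Finset.Icc (0:ℤ) (I:ℤ), f u) * ∏ u ∈ Finset.Ioc (I:ℤ) ((I:ℤ) + K), f u := by
  rw [← Finset.prod_union]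
  · congr 1
    ext x
    simp only [Finset.mem_union, Finset.mem_Icc, Finset.mem_Ioc]
    omega
  · rw [Finset.disjoint_left]
    intro x hx hx2
    simp only [Finset.mem_Icc, Finset.mem_Ioc] at hx hx2
    omega

/-- the ratio helper -/
lemma ratio_helper (a b c m1 m2 m3 : ℝ) (ha : 0 < a) (hb : 0 < b) (hc : 0 < c)
    (hm1 : 0 < m1) (hm2 : 0 < m2) (hm3 : 0 < m3) :
    a*b/c = (a*m1)*(b*m2)/(c*m3) ↔ m1*m2 = m3 := by
  rw [div_eq_div_iff (by positivity) (by positivity)]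
  constructor
  · intro h
    have h2 : (a*b*c)*m3 = (a*b*c)*(m1*m2) := by linear_combination h
    exact (mul_left_cancel₀ (by positivity) h2).symm
  · intro h
    linear_combination (-(a*b*c))*h

lemma tval_pos (S E : ℕ) (hS : 2 ≤ S) : 0 < tval S E := by
  unfold tval
  apply Real.rpow_pos_of_pos
  have : (2:ℝ) ≤ (S:ℝ) := by exact_mod_cast hS
  linarith

lemma tval_ge_one (S E : ℕ) (hS : 2 ≤ S) : 1 ≤ tval S E := by
  unfold tval
  apply Real.one_le_rpow
  · have : (2:ℝ) ≤ (S:ℝ) := by exact_mod_cast hS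
    linarith
  · positivity

lemma tval_sq (S E : ℕ) (hS : 2 ≤ S) : (tval S E)^2 = (S:ℝ)^E := by
  unfold tval
  have h0 : (0:ℝ) < (S:ℝ) := by
    have : (2:ℝ) ≤ (S:ℝ) := by exact_mod_cast hS
    linarith
  rw [← Real.rpow_natCast ((S:ℝ) ^ ((E:ℝ)/2)) 2, ← Real.rpow_mul h0.le, ← Real.rpow_natCast (S:ℝ) E]
  congr 1
  push_cast
  ring

/-- main reduction -/
lemma delta_eq_iff (S E : ℕ) (hS : 2 ≤ S) (I K : ℕ) (hK : 1 ≤ K) :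
    (delta (I+K+2) S E (I:ℤ) = delta (I+K+2) S E ((I:ℤ)+(K:ℤ))) ↔
      PP (S:ℝ) (tval S E) K = QQ (S:ℝ) K I := by
  have hs : (2:ℝ) ≤ (S:ℝ) := by exact_mod_cast hS
  have h0 : (0:ℝ) < (S:ℝ) := by linarith
  have h1 : (1:ℝ) < (S:ℝ) := by linarith
  have ht0 : 0 < tval S E := tval_pos S E hS
  set s : ℝ := (S:ℝ) with hsdef
  set t : ℝ := tval S E with htdef
  set N : ℕ := I+K+2 with hN
  -- the three factor functions
  set F : ℤ → ℝ := fun u => s ^ ((N:ℤ) - u - 1) * t + 1 with hF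
  set G : ℤ → ℝ := fun u => s ^ ((N:ℤ) - u) - 1 with hG
  set H : ℤ → ℝ := fun u => s ^ (u + 1) - 1 with hH
  have hdelta : ∀ X : ℤ, delta N S E X =
      (∏ u ∈ Finset.Icc (0:ℤ) X, F u) * (∏ u ∈ Finset.Icc (0:ℤ) X, G u) /
        (∏ u ∈ Finset.Icc (0:ℤ) X, H u) := by
    intro X; rfl
  -- positivity of prefix products
  have hX1 : 0 < ∏ u ∈ Finset.Icc (0:ℤ) (I:ℤ), F u := by
    apply Finset.prod_pos; intro u hu
    have : (0:ℝ) < s ^ ((N:ℤ) - u - 1) * t := mul_pos (zpow_pos h0 _) ht0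
    simp only [hF]; linarith
  have hX2 : 0 < ∏ u ∈ Finset.Icc (0:ℤ) (I:ℤ), G u := by
    apply Finset.prod_pos; intro u hu
    simp only [Finset.mem_Icc] at hu
    have : (1:ℝ) < s ^ ((N:ℤ) - u) := one_lt_zpow₀ h1 (by omega)
    simp only [hG]; linarith
  have hX3 : 0 < ∏ u ∈ Finset.Icc (0:ℤ) (I:ℤ), H u := by
    apply Finset.prod_pos; intro u hu
    simp only [Finset.mem_Icc] at hu
    have : (1:ℝ) < s ^ (u + 1) := one_lt_zpow₀ h1 (by omega)
    simp only [hH]; linarith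
  -- middle products
  have hM1 : ∏ u ∈ Finset.Ioc (I:ℤ) ((I:ℤ)+(K:ℤ)), F u = ∏ j ∈ range K, (s^(j+1)*t+1) := by
    rw [prod_Ioc_range]
    rw [show (∏ a ∈ range K, F ((I:ℤ) + 1 + (a:ℤ))) =
        ∏ a ∈ range K, (s^((K-1-a)+1)*t+1) from Finset.prod_congr rfl ?_]
    · exact Finset.prod_range_reflect (fun j => s^(j+1)*t+1) K
    · intro a ha
      simp only [Finset.mem_range] at ha
      simp only [hF]
      rw [show (N:ℤ) - ((I:ℤ)+1+(a:ℤ)) - 1 = (((K-1-a)+1 : ℕ):ℤ) by push_cast; omega,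
        zpow_natCast]
  have hM2 : ∏ u ∈ Finset.Ioc (I:ℤ) ((I:ℤ)+(K:ℤ)), G u = ∏ j ∈ range K, (s^(j+2)-1) := by
    rw [prod_Ioc_range]
    rw [show (∏ a ∈ range K, G ((I:ℤ) + 1 + (a:ℤ))) =
        ∏ a ∈ range K, (s^((K-1-a)+2)-1) from Finset.prod_congr rfl ?_]
    · exact Finset.prod_range_reflect (fun j => s^(j+2)-1) K
    · intro a ha
      simp only [Finset.mem_range] at ha
      simp only [hG]
      rw [show (N:ℤ) - ((I:ℤ)+1+(a:ℤ)) = (((K-1-a)+2 : ℕ):ℤ) by push_cast; omega,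
        zpow_natCast]
  have hM3 : ∏ u ∈ Finset.Ioc (I:ℤ) ((I:ℤ)+(K:ℤ)), H u = QQ s K I := by
    rw [prod_Ioc_range]
    unfold QQ
    apply Finset.prod_congr rfl
    intro a ha
    simp only [hH]
    rw [show (I:ℤ) + 1 + (a:ℤ) + 1 = ((I+2+a : ℕ):ℤ) by push_cast; ring, zpow_natCast]
  have hm1 : 0 < ∏ j ∈ range K, (s^(j+1)*t+1) := by
    apply Finset.prod_pos; intro j _
    have : (0:ℝ) < s^(j+1)*t := by positivity
    linarith
  have hm2 : 0 < ∏ j ∈ range K, (s^(j+2)-1) := by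
    apply Finset.prod_pos; intro j _
    have := spow2 hs (j+2) (by omega)
    linarith
  have hm3 : 0 < QQ s K I := QQ_pos hs
  rw [hdelta, hdelta]
  rw [show ((I:ℤ)+(K:ℤ)) = (I:ℤ)+(K:ℕ) by push_cast; ring] at *
  rw [prod_split I K F, prod_split I K G, prod_split I K H, hM1, hM2, hM3]
  rw [ratio_helper _ _ _ _ _ _ hX1 hX2 hX3 hm1 hm2 hm3]
  unfold PP
  rw [Finset.prod_mul_distrib]


lemma st_low {E : ℕ} (hs : 2 ≤ s) (ht0 : 0 ≤ t) (ht2 : t^2 = s^E) (hE : E ≤ 1) :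
    s*t + 1 ≤ s^2 := by
  have h0 : (0:ℝ) < s := hs0 hs
  have hts : t^2 ≤ s := by
    rw [ht2]
    calc s^E ≤ s^1 := pow_le_pow_right₀ (by linarith) hE
    _ = s := pow_one s
  have h1 : (s*t)^2 ≤ (s^2-1)^2 := by nlinarith [hts, sq_nonneg s, sq_nonneg (s-1), sq_nonneg (s+1), sq_nonneg (s*t)]
  have h2 : s*t ≤ s^2-1 := le_of_pow_le_pow_left₀ two_ne_zero (by nlinarith) h1
  linarith

lemma t_big {E : ℕ} (hs : 2 ≤ s) (ht2 : t^2 = s^E) (hE : 3 ≤ E) : 2*s^2 ≤ t^2 := by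
  rw [ht2]
  calc 2*s^2 ≤ s*s^2 := by nlinarith [sq_nonneg s]
  _ = s^3 := by ring
  _ ≤ s^E := pow_le_pow_right₀ (by linarith) hE

lemma t_of_sq (ht0 : 0 ≤ t) {c : ℝ} (hc : 0 ≤ c) (h : t^2 = c^2) : t = c := by
  rw [← Real.sqrt_sq ht0, h, Real.sqrt_sq hc]


set_option maxHeartbeats 1000000 in
lemma driver (S E K I : ℕ) (hS : 2 ≤ S) (hE : E ≤ 4) (hK : 1 ≤ K) (hKI : K ≤ I)
    (hPQ : PP (S:ℝ) (tval S E) K = QQ (S:ℝ) K I) :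
    K = 1 ∧ I = 2 ∧ E = 2 := by
  have hs2 : (2:ℝ) ≤ (S:ℝ) := by exact_mod_cast hS
  have ht1 : 1 ≤ tval S E := tval_ge_one S E hS
  have ht2 : (tval S E)^2 = (S:ℝ)^E := tval_sq S E hS
  set s : ℝ := (S:ℝ) with hsd
  set t : ℝ := tval S E with htd
  have h0 : (0:ℝ) < s := by linarith
  have ht0 : (0:ℝ) ≤ t := by linarith
  have hK5 : K ≤ 5 := by
    by_contra hc
    push_neg at hc
    refine absurd hPQ (ne_of_lt (lemI hs2 ht1 ht2 hK (by omega) ?_))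
    rw [sumB2]
    have h1 : K*(2*K+K+3) ≤ K*(2*I+K+3) := Nat.mul_le_mul_left K (by omega)
    have h2 : E*K ≤ 4*K := Nat.mul_le_mul_right K hE
    have h3 : 6*K ≤ K*K := Nat.mul_le_mul_right K (by omega)
    nlinarith [h1, h2, h3]
  interval_cases K
  · -- K = 1
    have hIb : I ≤ 4 := by
      by_contra hc
      push_neg at hc
      refine absurd hPQ (ne_of_lt (lemI hs2 ht1 ht2 (by norm_num) (by omega) ?_))
      rw [sumB2] <;> omega
    interval_cases I <;> interval_cases E
    · exact absurd hPQ.symm (ne_of_lt (lemIV hs2 ht1 ht2 (by norm_num) (st_low hs2 ht0 ht2 (by norm_num)) (by rw [sumB2] <;> omega)))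
    · exact absurd hPQ.symm (ne_of_lt (lemIV hs2 ht1 ht2 (by norm_num) (st_low hs2 ht0 ht2 (by norm_num)) (by rw [sumB2] <;> omega)))
    · exact absurd hPQ.symm (ne_of_lt (lemII hs2 ht1 ht2 (by norm_num) (by rw [sumB2] <;> omega)))
    · exact absurd hPQ.symm (ne_of_lt (lemII hs2 ht1 ht2 (by norm_num) (by rw [sumB2] <;> omega)))
    · exact absurd hPQ.symm (ne_of_lt (lemII hs2 ht1 ht2 (by norm_num) (by rw [sumB2] <;> omega)))
    · exfalso
      have htv : t = 1 := t_of_sq ht0 (by norm_num) (by rw [ht2]; norm_num)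
      rw [htv] at hPQ
      simp [PP, QQ, Finset.prod_range_succ] at hPQ
      nlinarith [hPQ, hs2, mul_pos (mul_pos h0 (show (0:ℝ) < s-1 by linarith))
        (show (0:ℝ) < s^2-1 by nlinarith [spow2 hs2 2 (by norm_num)])]
    · exfalso
      simp [PP, QQ, Finset.prod_range_succ] at hPQ
      have htp : t^2 < s^2 := by rw [ht2]; nlinarith [hs2]
      have htls : t < s := lt_of_pow_lt_pow_left₀ 2 (by linarith) htp
      nlinarith [hPQ, mul_pos (mul_pos h0 (show (0:ℝ) < s^2-1 by nlinarith [spow2 hs2 2 (by norm_num)]))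
        (sub_pos.mpr htls)]
    · exact ⟨rfl, rfl, rfl⟩
    · exfalso
      simp [PP, QQ, Finset.prod_range_succ] at hPQ
      have htp : s^2 < t^2 := by rw [ht2]; nlinarith [hs2, sq_nonneg s]
      have htgs : s < t := lt_of_pow_lt_pow_left₀ 2 (by linarith) htp
      nlinarith [hPQ, mul_pos (mul_pos h0 (sub_pos.mpr htgs))
        (show (0:ℝ) < s^2-1 by nlinarith [spow2 hs2 2 (by norm_num)])]
    · exact absurd hPQ.symm (ne_of_lt (lemII hs2 ht1 ht2 (by norm_num) (by rw [sumB2] <;> omega)))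
    · exact absurd hPQ (ne_of_lt (lemI hs2 ht1 ht2 (by norm_num) (by norm_num) (by rw [sumB2] <;> omega)))
    · exfalso
      simp [PP, QQ, Finset.prod_range_succ] at hPQ
      have htp : t^2 < s^2 := by rw [ht2]; nlinarith [hs2]
      have htls : t < s := lt_of_pow_lt_pow_left₀ 2 (by linarith) htp
      have h1 : s^3*t ≤ s^3*s := mul_le_mul_of_nonneg_left htls.le (by positivity)
      have h3 : s ≤ s*t := by nlinarith [h0, ht1]
      nlinarith [hPQ, h1, h3,
        mul_nonneg (mul_nonneg (sq_nonneg s) (sq_nonneg s)) (show (0:ℝ) ≤ s-2 by linarith),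
        mul_nonneg (sq_nonneg s) (show (0:ℝ) ≤ s^2-1 by nlinarith [spow2 hs2 2 (by norm_num)])]
    · exfalso
      have htv : t = s := t_of_sq ht0 h0.le ht2
      rw [htv] at hPQ
      simp [PP, QQ, Finset.prod_range_succ] at hPQ
      nlinarith [hPQ, spow2 hs2 4 (by norm_num),
        mul_nonneg (mul_nonneg (mul_nonneg (sq_nonneg s) (sq_nonneg s)) h0.le) (show (0:ℝ) ≤ s-2 by linarith)]
    · exfalso
      simp [PP, QQ, Finset.prod_range_succ] at hPQ
      have htp : s^2 < t^2 := by rw [ht2]; nlinarith [hs2, sq_nonneg s]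
      have htgs : s < t := lt_of_pow_lt_pow_left₀ 2 (by linarith) htp
      have htp2 : t^2 < (s^2)^2 := by rw [ht2]; nlinarith [hs2, pow_pos h0 3]
      have htl2 : t < s^2 := lt_of_pow_lt_pow_left₀ 2 (by positivity) htp2
      nlinarith [hPQ, mul_pos (pow_pos h0 3) (sub_pos.mpr htl2), mul_pos h0 (sub_pos.mpr htgs)]
    · exact absurd hPQ (ne_of_lt (lemIII hs2 ht1 (by norm_num) (by norm_num) (t_big hs2 ht2 (by norm_num)) (cond_eq hs2 ht0 ht2 (by rw [sumB2] <;> omega))))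
    · exact absurd hPQ (ne_of_lt (lemI hs2 ht1 ht2 (by norm_num) (by norm_num) (by rw [sumB2] <;> omega)))
    · exact absurd hPQ (ne_of_lt (lemI hs2 ht1 ht2 (by norm_num) (by norm_num) (by rw [sumB2] <;> omega)))
    · exact absurd hPQ (ne_of_lt (lemI hs2 ht1 ht2 (by norm_num) (by norm_num) (by rw [sumB2] <;> omega)))
    · exfalso
      simp [PP, QQ, Finset.prod_range_succ] at hPQ
      have htp : s^2 < t^2 := by rw [ht2]; nlinarith [hs2, sq_nonneg s]
      have htgs : s < t := lt_of_pow_lt_pow_left₀ 2 (by linarith) htp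
      have htp3 : t^2 < (s^3)^2 := by rw [ht2]; nlinarith [hs2, pow_pos h0 3, spow2 hs2 3 (by norm_num)]
      have htl3 : t < s^3 := lt_of_pow_lt_pow_left₀ 2 (by positivity) htp3
      nlinarith [hPQ, mul_pos (pow_pos h0 3) (sub_pos.mpr htl3), mul_pos h0 (sub_pos.mpr htgs)]
    · exfalso
      have htv : t = s^2 := t_of_sq ht0 (by positivity) (by rw [ht2]; ring)
      rw [htv] at hPQ
      simp [PP, QQ, Finset.prod_range_succ] at hPQ
      nlinarith [hPQ, pow_pos h0 5,
        mul_nonneg (pow_nonneg h0.le 5) (show (0:ℝ) ≤ s-2 by linarith),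
        mul_nonneg (sq_nonneg s) (show (0:ℝ) ≤ s-1 by linarith)]
  · -- K = 2
    have hIb : I ≤ 4 := by
      by_contra hc
      push_neg at hc
      refine absurd hPQ (ne_of_lt (lemI hs2 ht1 ht2 (by norm_num) (by omega) ?_))
      rw [sumB2] <;> omega
    interval_cases I <;> interval_cases E
    · exfalso
      have htv : t = 1 := t_of_sq ht0 (by norm_num) (by rw [ht2]; norm_num)
      rw [htv] at hPQ
      simp [PP, QQ, Finset.prod_range_succ] at hPQ
      have hs21 : (0:ℝ) < s^2-1 := by nlinarith [spow2 hs2 2 (by norm_num)]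
      have key : (s+1)*(s^3-1) < s^5-1 := by
        nlinarith [mul_pos (mul_pos h0 (show (0:ℝ) < s-1 by linarith))
          (show (0:ℝ) < s^3-s-1 by nlinarith [spow2 hs2 3 (by norm_num), sq_nonneg s, h0])]
      have hpos : (0:ℝ) < (s^2-1)*(s^2+1) := by positivity
      nlinarith [hPQ, mul_lt_mul_of_pos_left key hpos]
    · exact absurd hPQ.symm (ne_of_lt (lemIV hs2 ht1 ht2 (by norm_num) (st_low hs2 ht0 ht2 (by norm_num)) (by rw [sumB2] <;> omega)))
    · exact absurd hPQ.symm (ne_of_lt (lemII hs2 ht1 ht2 (by norm_num) (by rw [sumB2] <;> omega)))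
    · exact absurd hPQ.symm (ne_of_lt (lemII hs2 ht1 ht2 (by norm_num) (by rw [sumB2] <;> omega)))
    · exact absurd hPQ.symm (ne_of_lt (lemII hs2 ht1 ht2 (by norm_num) (by rw [sumB2] <;> omega)))
    · exact absurd hPQ (ne_of_lt (lemI hs2 ht1 ht2 (by norm_num) (by norm_num) (by rw [sumB2] <;> omega)))
    · exact absurd hPQ (ne_of_lt (lemI hs2 ht1 ht2 (by norm_num) (by norm_num) (by rw [sumB2] <;> omega)))
    · exfalso
      have htv : t = s := t_of_sq ht0 h0.le ht2
      rw [htv] at hPQ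
      simp [PP, QQ, Finset.prod_range_succ] at hPQ
      have key : s^4-1 < s^5-1 := by
        nlinarith [mul_nonneg (mul_nonneg (mul_nonneg (mul_nonneg h0.le h0.le) h0.le) h0.le) (show (0:ℝ) ≤ s-2 by linarith), pow_pos h0 4]
      have hpos : (0:ℝ) < s^6-1 := by nlinarith [spow2 hs2 6 (by norm_num)]
      nlinarith [hPQ, mul_lt_mul_of_pos_right key hpos]
    · exact absurd hPQ (ne_of_lt (lemIII hs2 ht1 (by norm_num) (by norm_num) (t_big hs2 ht2 (by norm_num)) (cond_eq hs2 ht0 ht2 (by rw [sumB2] <;> omega))))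
    · exact absurd hPQ.symm (ne_of_lt (lemII hs2 ht1 ht2 (by norm_num) (by rw [sumB2] <;> omega)))
    · exact absurd hPQ (ne_of_lt (lemI hs2 ht1 ht2 (by norm_num) (by norm_num) (by rw [sumB2] <;> omega)))
    · exact absurd hPQ (ne_of_lt (lemI hs2 ht1 ht2 (by norm_num) (by norm_num) (by rw [sumB2] <;> omega)))
    · exact absurd hPQ (ne_of_lt (lemI hs2 ht1 ht2 (by norm_num) (by norm_num) (by rw [sumB2] <;> omega)))
    · exact absurd hPQ (ne_of_lt (lemI hs2 ht1 ht2 (by norm_num) (by norm_num) (by rw [sumB2] <;> omega)))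
    · exfalso
      have htv : t = s^2 := t_of_sq ht0 (by positivity) (by rw [ht2]; ring)
      rw [htv] at hPQ
      simp [PP, QQ, Finset.prod_range_succ] at hPQ
      have key : (s^2-1)*(s^4+1) < s^7-1 := by
        nlinarith [mul_nonneg (pow_nonneg h0.le 6) (show (0:ℝ) ≤ s-1 by linarith),
          mul_nonneg (sq_nonneg s) (show (0:ℝ) ≤ s^2-1 by nlinarith [spow2 hs2 2 (by norm_num)]),
          pow_pos h0 6]
      have hpos : (0:ℝ) < s^6-1 := by nlinarith [spow2 hs2 6 (by norm_num)]
      nlinarith [hPQ, mul_lt_mul_of_pos_left key hpos]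
  · -- K = 3
    have hIb : I ≤ 4 := by
      by_contra hc
      push_neg at hc
      refine absurd hPQ (ne_of_lt (lemI hs2 ht1 ht2 (by norm_num) (by omega) ?_))
      rw [sumB2] <;> omega
    interval_cases I <;> interval_cases E
    · exact absurd hPQ (ne_of_lt (lemI hs2 ht1 ht2 (by norm_num) (by norm_num) (by rw [sumB2] <;> omega)))
    · exact absurd hPQ (ne_of_lt (lemV hs2 ht1 ht2 (by norm_num) (by norm_num) (by rw [sumB2] <;> omega)))
    · exfalso
      have htv : t = s := t_of_sq ht0 h0.le ht2
      rw [htv] at hPQ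
      simp [PP, QQ, Finset.prod_range_succ] at hPQ
      have key : (s^4-1)*(s^8-1) < (s^5-1)*(s^7-1) := by
        nlinarith [mul_pos (mul_pos (pow_pos h0 4) (show (0:ℝ) < s-1 by linarith))
          (show (0:ℝ) < s^3-1 by nlinarith [spow2 hs2 3 (by norm_num)])]
      have hpos : (0:ℝ) < s^6-1 := by nlinarith [spow2 hs2 6 (by norm_num)]
      nlinarith [hPQ, mul_lt_mul_of_pos_right key hpos]
    · exact absurd hPQ.symm (ne_of_lt (lemII hs2 ht1 ht2 (by norm_num) (by rw [sumB2] <;> omega)))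
    · exact absurd hPQ.symm (ne_of_lt (lemII hs2 ht1 ht2 (by norm_num) (by rw [sumB2] <;> omega)))
    · exact absurd hPQ (ne_of_lt (lemI hs2 ht1 ht2 (by norm_num) (by norm_num) (by rw [sumB2] <;> omega)))
    · exact absurd hPQ (ne_of_lt (lemI hs2 ht1 ht2 (by norm_num) (by norm_num) (by rw [sumB2] <;> omega)))
    · exact absurd hPQ (ne_of_lt (lemI hs2 ht1 ht2 (by norm_num) (by norm_num) (by rw [sumB2] <;> omega)))
    · exact absurd hPQ (ne_of_lt (lemV hs2 ht1 ht2 (by norm_num) (by norm_num) (by rw [sumB2] <;> omega)))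
    · exact absurd hPQ (ne_of_lt (lemIII hs2 ht1 (by norm_num) (by norm_num) (t_big hs2 ht2 (by norm_num)) (cond_eq hs2 ht0 ht2 (by rw [sumB2] <;> omega))))
  · -- K = 4
    have hIb : I ≤ 4 := by
      by_contra hc
      push_neg at hc
      refine absurd hPQ (ne_of_lt (lemI hs2 ht1 ht2 (by norm_num) (by omega) ?_))
      rw [sumB2] <;> omega
    interval_cases I <;> interval_cases E
    · exact absurd hPQ (ne_of_lt (lemI hs2 ht1 ht2 (by norm_num) (by norm_num) (by rw [sumB2] <;> omega)))
    · exact absurd hPQ (ne_of_lt (lemI hs2 ht1 ht2 (by norm_num) (by norm_num) (by rw [sumB2] <;> omega)))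
    · exact absurd hPQ (ne_of_lt (lemI hs2 ht1 ht2 (by norm_num) (by norm_num) (by rw [sumB2] <;> omega)))
    · exact absurd hPQ (ne_of_lt (lemIII hs2 ht1 (by norm_num) (by norm_num) (t_big hs2 ht2 (by norm_num)) (cond_eq hs2 ht0 ht2 (by rw [sumB2] <;> omega))))
    · exact absurd hPQ.symm (ne_of_lt (lemII hs2 ht1 ht2 (by norm_num) (by rw [sumB2] <;> omega)))
  · -- K = 5
    have hIb : I ≤ 5 := by
      by_contra hc
      push_neg at hc
      refine absurd hPQ (ne_of_lt (lemI hs2 ht1 ht2 (by norm_num) (by omega) ?_))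
      rw [sumB2] <;> omega
    interval_cases I <;> interval_cases E
    · exact absurd hPQ (ne_of_lt (lemI hs2 ht1 ht2 (by norm_num) (by norm_num) (by rw [sumB2] <;> omega)))
    · exact absurd hPQ (ne_of_lt (lemI hs2 ht1 ht2 (by norm_num) (by norm_num) (by rw [sumB2] <;> omega)))
    · exact absurd hPQ (ne_of_lt (lemI hs2 ht1 ht2 (by norm_num) (by norm_num) (by rw [sumB2] <;> omega)))
    · exact absurd hPQ (ne_of_lt (lemI hs2 ht1 ht2 (by norm_num) (by norm_num) (by rw [sumB2] <;> omega)))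
    · exact absurd hPQ (ne_of_lt (lemIII hs2 ht1 (by norm_num) (by norm_num) (t_big hs2 ht2 (by norm_num)) (cond_eq hs2 ht0 ht2 (by rw [sumB2] <;> omega))))

end Stmt8

theorem stmt_8 (n s e : ℕ) (hn : 3 ≤ n) (hs : 2 ≤ s) (he : e ≤ 4)
    (i : ℤ) (hi : ((n:ℝ) - 2) / 2 ≤ (i:ℝ)) (hi' : i < (n:ℤ) - 2) :
    delta n s e i = delta n s e ((n:ℤ) - 2) ↔ (n = 5 ∧ i = 2 ∧ e = 2) := by
  have hin : (n:ℤ) - 2 ≤ 2*i := by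
    have h2 : ((n:ℝ) - 2) ≤ 2*(i:ℝ) := by linarith
    exact_mod_cast h2
  set I : ℕ := i.toNat with hIdef
  set K : ℕ := ((n:ℤ) - 2 - i).toNat with hKdef
  have hiI : (I:ℤ) = i := Int.toNat_of_nonneg (by omega)
  have hKi : (K:ℤ) = (n:ℤ) - 2 - i := Int.toNat_of_nonneg (by omega)
  have hnIK : n = I + K + 2 := by omega
  have hK1 : 1 ≤ K := by omega
  have hKI : K ≤ I := by omega
  have e1 : i = (I:ℤ) := hiI.symm
  have e2 : (n:ℤ) - 2 = (I:ℤ) + (K:ℤ) := by omega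
  rw [e1, e2, hnIK, Stmt8.delta_eq_iff s e hs I K hK1]
  constructor
  · intro h
    obtain ⟨hk1, hi2, he2⟩ := Stmt8.driver s e K I hs he hK1 hKI h
    refine ⟨by omega, by omega, by omega⟩
  · rintro ⟨h5, h2i, he2⟩
    have hI2 : I = 2 := by omega
    have hk1 : K = 1 := by omega
    subst he2
    rw [hI2, hk1]
    have hs2 : (2:ℝ) ≤ (s:ℝ) := by exact_mod_cast hs
    have htv : tval s 2 = (s:ℝ) := by
      apply Stmt8.t_of_sq (by linarith [Stmt8.tval_ge_one s 2 hs]) (by linarith)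
      exact Stmt8.tval_sq s 2 hs
    rw [htv]
    simp only [Stmt8.PP, Stmt8.QQ, Finset.prod_range_succ, Finset.prod_range_zero, one_mul]
    norm_num
    ring
end

section
/- For every integer s ≥ 2 and every integer m ≥ 6, one has ∏_{v=2}^{m} (s^{v+1}+1)(s^{v}−1) < ∏_{v=2}^{m} (s^{v+m−1}−1). -/
open Finset

theorem stmt_9 (s m : ℕ) (hs : 2 ≤ s) (hm : 6 ≤ m) :
    (∏ v ∈ Finset.Icc 2 m, (((s:ℤ) ^ (v + 1) + 1) * ((s:ℤ) ^ v - 1))) <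
    ∏ v ∈ Finset.Icc 2 m, ((s:ℤ) ^ (v + m - 1) - 1) := by
  set S : ℤ := (s:ℤ) with hSdef
  have hS : (2:ℤ) ≤ S := by rw [hSdef]; exact_mod_cast hs
  have h1S : (1:ℤ) ≤ S := by linarith
  have hne : (Finset.Icc 2 m).Nonempty := ⟨2, by simp [Finset.mem_Icc]; omega⟩
  have hPnn : (0:ℤ) ≤ ∏ v ∈ Finset.Icc 2 m, (S ^ (v + 1) - 1) := by
    apply Finset.prod_nonneg
    intro v hv
    have : (1:ℤ) ≤ S ^ (v+1) := one_le_pow₀ h1S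
    linarith
  -- Step 1: strict termwise bound
  have step1 : (∏ v ∈ Finset.Icc 2 m, ((S ^ (v + 1) + 1) * (S ^ v - 1))) <
      ∏ v ∈ Finset.Icc 2 m, (S ^ v * (S ^ (v + 1) - 1)) := by
    apply Finset.prod_lt_prod_of_nonempty _ _ hne
    · intro v hv
      have hv2 : 2 ≤ v := (Finset.mem_Icc.mp hv).1
      have h1 : (1:ℤ) < S ^ v := one_lt_pow₀ (by linarith) (by omega)
      have h2 : (0:ℤ) < S ^ (v+1) + 1 := by positivity
      exact mul_pos h2 (by linarith)
    · intro v hv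
      have h1 : (1:ℤ) ≤ S ^ v := one_le_pow₀ h1S
      have h2 : S ^ (v+1) = S ^ v * S := pow_succ S v
      nlinarith [h1, h2]
  -- rewrite middle product
  have step2 : (∏ v ∈ Finset.Icc 2 m, (S ^ v * (S ^ (v + 1) - 1))) =
      S ^ (∑ v ∈ Finset.Icc 2 m, v) * ∏ v ∈ Finset.Icc 2 m, (S ^ (v + 1) - 1) := by
    rw [Finset.prod_mul_distrib, Finset.prod_pow_eq_pow_sum]
  -- sum bound
  have hsum : (∑ v ∈ Finset.Icc 2 m, v) ≤ (m - 2) * (m - 1) := by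
    obtain ⟨k, rfl⟩ : ∃ k, m = k + 6 := ⟨m - 6, by omega⟩
    have hsplit : (∑ v ∈ Finset.Ico 0 2, v) + (∑ v ∈ Finset.Ico 2 (k+6+1), v)
        = ∑ v ∈ Finset.Ico 0 (k+6+1), v :=
      Finset.sum_Ico_consecutive _ (by omega) (by omega)
    have hIcc : Finset.Icc 2 (k+6) = Finset.Ico 2 (k+6+1) := by rw [Finset.Ico_add_one_right_eq_Icc]
    have hrange : Finset.Ico 0 (k+6+1) = Finset.range (k+6+1) := by rw [Finset.range_eq_Ico]
    have h0 : (∑ v ∈ Finset.Ico 0 2, v) = 1 := by decide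
    have hg : (∑ v ∈ Finset.range (k+6+1), v) * 2 = (k+6+1) * (k+6+1-1) :=
      Finset.sum_range_id_mul_two _
    have hm1 : k + 6 - 2 = k + 4 := by omega
    have hm2 : k + 6 - 1 = k + 5 := by omega
    rw [hIcc, hm1, hm2]
    have ha : (∑ v ∈ Finset.Ico 2 (k+6+1), v) * 2 + 2 = (k+7) * (k+6) := by
      have := hsplit
      rw [hrange] at this
      have h2 : (∑ v ∈ Finset.range (k+6+1), v) * 2 = (k+7) * (k+6) := by
        rw [hg]; have e : k+6+1-1 = k+6 := by omega
        rw [e]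
      omega
    have hb : (k+7) * (k+6) ≤ (k+4) * (k+5) * 2 + 2 := by nlinarith
    omega
  have step3 : S ^ (∑ v ∈ Finset.Icc 2 m, v) * (∏ v ∈ Finset.Icc 2 m, (S ^ (v + 1) - 1)) ≤
      S ^ ((m - 2) * (m - 1)) * ∏ v ∈ Finset.Icc 2 m, (S ^ (v + 1) - 1) := by
    apply mul_le_mul_of_nonneg_right _ hPnn
    exact pow_le_pow_right₀ h1S hsum
  have step4 : S ^ ((m - 2) * (m - 1)) * (∏ v ∈ Finset.Icc 2 m, (S ^ (v + 1) - 1)) =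
      ∏ v ∈ Finset.Icc 2 m, (S ^ (m - 2) * (S ^ (v + 1) - 1)) := by
    have hc : m + 1 - 2 = m - 1 := by omega
    rw [Finset.prod_mul_distrib, Finset.prod_const, Nat.card_Icc, hc, ← pow_mul]
  have step5 : (∏ v ∈ Finset.Icc 2 m, (S ^ (m - 2) * (S ^ (v + 1) - 1))) ≤
      ∏ v ∈ Finset.Icc 2 m, (S ^ (v + m - 1) - 1) := by
    apply Finset.prod_le_prod
    · intro v hv
      have h1 : (1:ℤ) ≤ S ^ (v+1) := one_le_pow₀ h1S
      have h2 : (0:ℤ) ≤ S ^ (m-2) := by positivity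
      nlinarith
    · intro v hv
      have hv2 : 2 ≤ v := (Finset.mem_Icc.mp hv).1
      have he : v + m - 1 = (m - 2) + (v + 1) := by omega
      have h1 : (1:ℤ) ≤ S ^ (m - 2) := one_le_pow₀ h1S
      rw [he, pow_add S (m-2) (v+1)]
      nlinarith [h1]
  calc (∏ v ∈ Finset.Icc 2 m, ((S ^ (v + 1) + 1) * (S ^ v - 1)))
      < ∏ v ∈ Finset.Icc 2 m, (S ^ v * (S ^ (v + 1) - 1)) := step1
    _ = S ^ (∑ v ∈ Finset.Icc 2 m, v) * ∏ v ∈ Finset.Icc 2 m, (S ^ (v + 1) - 1) := step2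
    _ ≤ S ^ ((m - 2) * (m - 1)) * ∏ v ∈ Finset.Icc 2 m, (S ^ (v + 1) - 1) := step3
    _ = ∏ v ∈ Finset.Icc 2 m, (S ^ (m - 2) * (S ^ (v + 1) - 1)) := step4
    _ ≤ ∏ v ∈ Finset.Icc 2 m, (S ^ (v + m - 1) - 1) := step5
end

section
/- Let i be an integer with (n−2)/2 ≤ i ≤ n−2. Then κ(i) > κ(i+1). -/
open Finset

/-- `F(i,k) = ∏_{u=n−2i+k−1}^{n−i−2} (s^u·t + 1)`. -/
noncomputable def F (n s e : ℕ) (i k : ℤ) : ℝ :=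
  ∏ u ∈ Finset.Icc ((n:ℤ) - 2*i + k - 1) ((n:ℤ) - i - 2), ((s:ℝ) ^ u * tval s e + 1)

/-- `G(i,k) = s^{(i−k)²} · ∏_{v=1}^{k+1} (s^{i−k+v}−1)/(s^v−1)
  · ∏_{v=1}^{i−k} (s^{n−2i+k−1+v}−1)/(s^v−1)`. -/
noncomputable def G (n s : ℕ) (i k : ℤ) : ℝ :=
  (s:ℝ) ^ ((i - k)^2) *
  (∏ v ∈ Finset.Icc (1:ℤ) (k + 1), ((s:ℝ) ^ (i - k + v) - 1) / ((s:ℝ) ^ v - 1)) *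
  (∏ v ∈ Finset.Icc (1:ℤ) (i - k), ((s:ℝ) ^ ((n:ℤ) - 2*i + k - 1 + v) - 1) / ((s:ℝ) ^ v - 1))

/-- `κ(i) = Σ_{k = max(2i−n+1,−1)}^{i−1} F(i,k)·G(i,k)`, the degree of `(Δ_i, ⊥)`. -/
noncomputable def kappa (n s e : ℕ) (i : ℤ) : ℝ :=
  ∑ k ∈ Finset.Icc (max (2*i - (n:ℤ) + 1) (-1)) (i - 1), F n s e i k * G n s i k

/-!
For `2i ≥ n - 2` the lower limit of `κ(i)` is `2i - n + 1`, so after the shift `k ↦ k + 1` the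
sum `κ(i + 1)` consists of the summands of `κ(i)` other than the first, positive one, and it is
enough to compare summands. Both factors decrease: `F(i + 1, k + 1)` is the product of the same
number of consecutive factors `s^u t + 1` as `F(i, k)`, shifted down by one, and the recursions of
the Gaussian binomials in `G` give
`G(i + 1, k + 1) / G(i, k) = (s^(i+2) - 1)(s^(n-2i+k-1) - 1) / ((s^(k+2) - 1)(s^(n-i-1) - 1))`,
which is at most `1` since `n - 2i + k - 1 ≤ k + 2`.
-/

namespace Finset

variable {α M : Type*} [LinearOrder α] [One α] [Add α] [LocallyFiniteOrder α] [SuccAddOrder α]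
  [NoMaxOrder α] [CommMonoid M]

theorem prod_Icc_eq_mul_prod_Icc_add_one (f : α → M) {a b : α} (h : a ≤ b) :
    ∏ x ∈ Icc a b, f x = f a * ∏ x ∈ Icc (a + 1) b, f x := by
  rw [← insert_Icc_add_one_left_eq_Icc h, prod_insert (by simp)]

theorem prod_Icc_add_one_right (f : α → M) {a b : α} (h : a ≤ b + 1) :
    ∏ x ∈ Icc a (b + 1), f x = (∏ x ∈ Icc a b, f x) * f (b + 1) := by
  rw [← insert_Icc_right_eq_Icc_add_one h, prod_insert (by simp), mul_comm]

theorem mul_prod_Icc_add_one_add_one (f : α → M) {a b : α} (h : a ≤ b + 1) :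
    f a * ∏ x ∈ Icc (a + 1) (b + 1), f x = (∏ x ∈ Icc a b, f x) * f (b + 1) := by
  rw [← prod_Icc_eq_mul_prod_Icc_add_one f h, prod_Icc_add_one_right f h]

end Finset

theorem prod_Icc_shift_div_mul_eq {K : Type*} [DivisionCommMonoid K] (g h : ℤ → K) (c : ℤ)
    {m : ℤ} (hm : 0 ≤ m) :
    (∏ v ∈ Icc 1 m, g (c + v) / h v) * g (c + 1 + m) =
      g (c + 1) * ∏ v ∈ Icc 1 m, g (c + 1 + v) / h v := by
  have hshift (d : ℤ) : ∏ v ∈ Icc 1 m, g (d + v) = ∏ u ∈ Icc (d + 1) (d + m), g u := by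
    rw [← map_add_left_Icc, prod_map]; rfl
  have hnum := mul_prod_Icc_add_one_add_one g (show c + 1 ≤ c + m + 1 by omega)
  rw [prod_div_distrib, prod_div_distrib, div_mul_eq_mul_div, mul_div_assoc', hshift, hshift,
    add_right_comm c 1 m, ← hnum]

theorem mul_sub_one_mul_sub_one_le {q r x : ℝ} (hx : 1 ≤ x) (hrq : r ≤ q) :
    (q * x - 1) * (r - 1) ≤ (q - 1) * (r * x - 1) := by
  nlinarith [mul_nonneg (sub_nonneg.2 hx) (sub_nonneg.2 hrq)]

theorem tval_nonneg (s e : ℕ) : 0 ≤ tval s e := Real.rpow_nonneg (Nat.cast_nonneg s) _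

variable {n s e : ℕ} {i k : ℤ}

theorem F_pos : 0 < F n s e i k :=
  prod_pos fun u _ => by have := tval_nonneg s e; positivity

theorem one_lt_natCast_zpow (hs : 1 < s) {m : ℤ} (hm : 0 < m) : 1 < (s : ℝ) ^ m :=
  one_lt_zpow₀ (by exact_mod_cast hs) hm

theorem G_pos (hs : 1 < s) (hki : k ≤ i) (hik : 0 ≤ (n : ℤ) - 2 * i + k - 1) :
    0 < G n s i k := by
  have hfrac {a : ℤ} (ha : 0 ≤ a) (b : ℤ) :
      ∀ v ∈ Icc 1 b, 0 < ((s : ℝ) ^ (a + v) - 1) / ((s : ℝ) ^ v - 1) := fun v hv =>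
    div_pos (sub_pos.2 (one_lt_natCast_zpow hs (by grind)))
      (sub_pos.2 (one_lt_natCast_zpow hs (by grind)))
  exact mul_pos (mul_pos (zpow_pos (by positivity) _) (prod_pos (hfrac (by omega) _)))
    (prod_pos (hfrac hik _))

theorem F_succ_succ (hki : k ≤ i) :
    ((s : ℝ) ^ ((n : ℤ) - 2 * i + k - 2) * tval s e + 1) * F n s e i k =
      F n s e (i + 1) (k + 1) * ((s : ℝ) ^ ((n : ℤ) - i - 2) * tval s e + 1) := by
  have h := mul_prod_Icc_add_one_add_one (fun u => (s : ℝ) ^ u * tval s e + 1)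
    (show (n : ℤ) - 2 * i + k - 2 ≤ n - i - 3 + 1 by omega)
  simp only [show (n : ℤ) - 2 * i + k - 2 + 1 = n - 2 * i + k - 1 by ring,
    show (n : ℤ) - i - 3 + 1 = n - i - 2 by ring] at h
  simpa only [F, show (n : ℤ) - 2 * (i + 1) + (k + 1) - 1 = n - 2 * i + k - 2 by ring,
    show (n : ℤ) - (i + 1) - 2 = n - i - 3 by ring] using h

theorem G_succ_succ (hs : 1 < s) (hk : -1 ≤ k) (hki : k ≤ i) :
    ((s : ℝ) ^ (k + 2) - 1) * ((s : ℝ) ^ ((n : ℤ) - i - 1) - 1) * G n s (i + 1) (k + 1) =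
      ((s : ℝ) ^ (i + 2) - 1) * ((s : ℝ) ^ ((n : ℤ) - 2 * i + k - 1) - 1) * G n s i k := by
  have hA := prod_Icc_add_one_right (fun v => ((s : ℝ) ^ (i - k + v) - 1) / ((s : ℝ) ^ v - 1))
    (show 1 ≤ k + 1 + 1 by omega)
  have hB := prod_Icc_shift_div_mul_eq (fun u => (s : ℝ) ^ u - 1) (fun v => (s : ℝ) ^ v - 1)
    ((n : ℤ) - 2 * i + k - 2) (show 0 ≤ i - k by omega)
  simp only [show k + 1 + 1 = k + 2 by ring, show i - k + (k + 2) = i + 2 by ring] at hA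
  simp only [show (n : ℤ) - 2 * i + k - 2 + 1 = n - 2 * i + k - 1 by ring,
    show (n : ℤ) - 2 * i + k - 1 + (i - k) = n - i - 1 by ring] at hB
  have hQ : (s : ℝ) ^ (k + 2) - 1 ≠ 0 := (sub_pos.2 (one_lt_natCast_zpow hs (by omega))).ne'
  simp only [G, show i + 1 - (k + 1) = i - k by ring, show k + 1 + 1 = k + 2 by ring,
    show (n : ℤ) - 2 * (i + 1) + (k + 1) - 1 = n - 2 * i + k - 2 by ring, hA]
  set A := ∏ v ∈ Icc 1 (k + 1), ((s : ℝ) ^ (i - k + v) - 1) / ((s : ℝ) ^ v - 1)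
  field_simp
  linear_combination A * ((s : ℝ) ^ (i + 2) - 1) * hB

theorem F_succ_succ_le (hs : 1 ≤ s) (hki : k ≤ i) :
    F n s e (i + 1) (k + 1) ≤ F n s e i k := by
  have h := F_succ_succ (n := n) (s := s) (e := e) hki
  have ht := tval_nonneg s e
  have hle : (s : ℝ) ^ ((n : ℤ) - 2 * i + k - 2) * tval s e + 1 ≤
      (s : ℝ) ^ ((n : ℤ) - i - 2) * tval s e + 1 := by
    gcongr
    · exact_mod_cast hs
    · omega
  refine le_of_mul_le_mul_right ?_
    (show 0 < (s : ℝ) ^ ((n : ℤ) - i - 2) * tval s e + 1 by positivity)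
  rw [← h, mul_comm _ (F n s e i k)]
  exact mul_le_mul_of_nonneg_left hle F_pos.le

theorem G_succ_succ_le (hs : 1 < s) (hn : n ≤ 2 * i + 3) (hk₁ : 2 * i - n + 2 ≤ k)
    (hk₂ : k ≤ i - 1) : G n s (i + 1) (k + 1) ≤ G n s i k := by
  have h := G_succ_succ (n := n) hs (show -1 ≤ k by omega) (show k ≤ i by omega)
  have hs₀ : (s : ℝ) ≠ 0 := by positivity
  have hs₁ : (1 : ℝ) ≤ s := by exact_mod_cast hs.le
  have hc : 0 < ((s : ℝ) ^ (k + 2) - 1) * ((s : ℝ) ^ ((n : ℤ) - i - 1) - 1) :=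
    mul_pos (sub_pos.2 (one_lt_natCast_zpow hs (by omega)))
      (sub_pos.2 (one_lt_natCast_zpow hs (by omega)))
  have hqx : (s : ℝ) ^ (i + 2) = (s : ℝ) ^ (k + 2) * (s : ℝ) ^ (i - k) := by
    rw [← zpow_add₀ hs₀]; ring_nf
  have hrx : (s : ℝ) ^ ((n : ℤ) - i - 1) =
      (s : ℝ) ^ ((n : ℤ) - 2 * i + k - 1) * (s : ℝ) ^ (i - k) := by
    rw [← zpow_add₀ hs₀]; ring_nf
  refine le_of_mul_le_mul_left ?_ hc
  rw [h, hqx, hrx]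
  exact mul_le_mul_of_nonneg_right
    (mul_sub_one_mul_sub_one_le (one_le_zpow₀ hs₁ (by omega))
      (zpow_le_zpow_right₀ hs₁ (by omega)))
    (G_pos hs (by omega) (by omega)).le

theorem kappa_eq_sum (h : n ≤ 2 * i + 2) :
    kappa n s e i = ∑ k ∈ Icc (2 * i - n + 1) (i - 1), F n s e i k * G n s i k := by
  rw [kappa, max_eq_left (by omega)]

theorem kappa_add_one_eq_sum (h : n ≤ 2 * i + 2) :
    kappa n s e (i + 1) =
      ∑ k ∈ Icc (2 * i - n + 2) (i - 1), F n s e (i + 1) (k + 1) * G n s (i + 1) (k + 1) := by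
  rw [kappa_eq_sum (by omega), show 2 * (i + 1) - n + 1 = 2 * i - n + 2 + 1 by ring,
    show i + 1 - 1 = i - 1 + 1 by ring, ← map_add_right_Icc, sum_map]
  rfl

theorem stmt_10_general (n s e : ℕ) (hs : 2 ≤ s)
    (i : ℤ) (hi : ((n:ℝ) - 2) / 2 ≤ (i:ℝ)) (hi' : i ≤ (n:ℤ) - 2) :
    kappa n s e i > kappa n s e (i + 1) := by
  have h2i : (n : ℤ) ≤ 2 * i + 2 := by
    have : (n : ℝ) ≤ 2 * i + 2 := by linarith
    exact_mod_cast this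
  rw [kappa_add_one_eq_sum h2i, kappa_eq_sum h2i,
    ← insert_Icc_add_one_left_eq_Icc (show 2 * i - n + 1 ≤ i - 1 by omega),
    sum_insert (by simp),
    show 2 * i - n + 1 + 1 = 2 * i - (n : ℤ) + 2 by ring]
  refine lt_add_of_pos_of_le (mul_pos F_pos (G_pos hs (by omega) (by omega)))
    (sum_le_sum fun k hk => ?_)
  rw [mem_Icc] at hk
  exact mul_le_mul (F_succ_succ_le (by omega) (by omega)) (G_succ_succ_le hs (by omega) hk.1 hk.2)
    (G_pos hs (by omega) (by omega)).le F_pos.le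

theorem stmt_10 (n s e : ℕ) (hn : 3 ≤ n) (hs : 2 ≤ s) (he : e ≤ 4)
    (i : ℤ) (hi : ((n:ℝ) - 2) / 2 ≤ (i:ℝ)) (hi' : i ≤ (n:ℤ) - 2) :
    kappa n s e i > kappa n s e (i + 1) :=
  stmt_10_general n s e hs i hi hi'
end
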